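/- arXiv:2603.03262 — 2 statements merged into one kernel-verified Lean document; each statement's English description precedes it below -/
import Mathlib

section
/- (Cusp Minimization) Let G be a locally colored graph. Assume ω is a cycle with source a vertex v, with no cusp at v, but containing a cusp of vertex u and color α. Suppose there exists a simple open cusp-free path q with source u whose starting color is not α, whose target is a vertex x of ω, and which has no vertex in common with ω other than u and x. Then either there exists a cusp-free cycle having q as a sub-path, or there exists a cycle with source v, with no cusp at v, and with strictly fewer cusps than ω. -/
/-- A finite undirected multigraph without loops: each edge is incident to
exactly two distinct endpoints. -/
structure Multigraph (V : Type) (E : Type) where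
  inc : E → V → Prop
  exists_two : ∀ e : E, ∃ a b : V, a ≠ b ∧ ∀ w : V, inc e w ↔ (w = a ∨ w = b)

namespace Multigraph

variable {V E C : Type}

/-- A path (walk) in a multigraph: an alternating sequence of vertices and
edges such that the endpoints of the `i`-th edge are exactly the `i`-th and
`(i+1)`-th vertices. -/
structure Walk (G : Multigraph V E) where
  len : ℕ
  vert : Fin (len + 1) → V
  edge : Fin len → E
  incs : ∀ (i : ℕ) (h : i < len), ∀ w : V,
    G.inc (edge ⟨i, h⟩) w ↔ (w = vert ⟨i, by omega⟩ ∨ w = vert ⟨i + 1, by omega⟩)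

variable {G : Multigraph V E}

namespace Walk

/-- The source (first vertex) of a path. -/
def src (p : G.Walk) : V := p.vert ⟨0, by omega⟩

/-- The target (last vertex) of a path. -/
def tgt (p : G.Walk) : V := p.vert ⟨p.len, by omega⟩

def IsClosed (p : G.Walk) : Prop := p.src = p.tgt

def IsOpen (p : G.Walk) : Prop := p.src ≠ p.tgt

/-- A path is simple when its edges are pairwise distinct and its vertices are
pairwise distinct, except that its two endpoints may coincide. -/
def IsSimple (p : G.Walk) : Prop :=
  (∀ (i j : ℕ) (hi : i < p.len) (hj : j < p.len),
      p.edge ⟨i, hi⟩ = p.edge ⟨j, hj⟩ → i = j) ∧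
  (∀ (i j : ℕ) (hi : i < p.len + 1) (hj : j < p.len + 1), i < j →
      p.vert ⟨i, hi⟩ = p.vert ⟨j, hj⟩ → i = 0 ∧ j = p.len)

/-- A cycle is a non-empty simple closed path. -/
def IsCycle (p : G.Walk) : Prop := p.IsSimple ∧ p.IsClosed ∧ 0 < p.len

/-- `x` occurs as a vertex of `p`. -/
def MemV (p : G.Walk) (x : V) : Prop := ∃ (i : ℕ) (h : i < p.len + 1), p.vert ⟨i, h⟩ = x

/-- `e` occurs as an edge of `p`. -/
def MemE (p : G.Walk) (e : E) : Prop := ∃ (i : ℕ) (h : i < p.len), p.edge ⟨i, h⟩ = e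

/-- With respect to a local coloring `c`, the path `p` has a cusp at
vertex-position `j`, at vertex `u`, with color `α`: either an internal cusp
(two consecutive distinct edges with the same color at their middle vertex),
or -- when `j = 0` and `p` is closed -- the cusp formed by its last edge, its
source and its first edge. -/
def CuspAt (c : E → V → C) (p : G.Walk) (j : ℕ) (u : V) (α : C) : Prop :=
  (∃ (h1 : 0 < j) (h2 : j < p.len),
      p.vert ⟨j, by omega⟩ = u ∧
      p.edge ⟨j - 1, by omega⟩ ≠ p.edge ⟨j, h2⟩ ∧
      c (p.edge ⟨j - 1, by omega⟩) u = α ∧ c (p.edge ⟨j, h2⟩) u = α) ∨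
  (j = 0 ∧ p.IsClosed ∧ p.src = u ∧
    ∃ h : 0 < p.len,
      p.edge ⟨p.len - 1, by omega⟩ ≠ p.edge ⟨0, h⟩ ∧
      c (p.edge ⟨p.len - 1, by omega⟩) u = α ∧ c (p.edge ⟨0, h⟩) u = α)

/-- `p` has a cusp at vertex-position `j`. -/
def CuspIdx (c : E → V → C) (p : G.Walk) (j : ℕ) : Prop := ∃ u α, p.CuspAt c j u α

/-- `p` has a cusp whose vertex is `u`. -/
def HasCuspAtV (c : E → V → C) (p : G.Walk) (u : V) : Prop := ∃ j α, p.CuspAt c j u α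

/-- A cusp-free (alternating) path. -/
def CuspFree (c : E → V → C) (p : G.Walk) : Prop := ∀ j : ℕ, ¬ p.CuspIdx c j

/-- The number of cusps of a path. -/
noncomputable def cuspCount (c : E → V → C) (p : G.Walk) : ℕ :=
  {j : ℕ | p.CuspIdx c j}.ncard

/-- The starting color of `p` is not `α`. -/
def StartColorNe (c : E → V → C) (p : G.Walk) (α : C) : Prop :=
  ∀ h : 0 < p.len, c (p.edge ⟨0, h⟩) p.src ≠ α

/-- `p` is non-empty and its ending color is `β`. -/
def EndColorIs (c : E → V → C) (p : G.Walk) (β : C) : Prop :=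
  ∃ h : 0 < p.len, c (p.edge ⟨p.len - 1, by omega⟩) p.tgt = β

/-- `q` is a (contiguous) sub-path of `p`. -/
def IsSubpathOf (q p : G.Walk) : Prop :=
  ∃ (k : ℕ) (hk : k + q.len ≤ p.len),
    (∀ (i : ℕ) (hi : i < q.len + 1), q.vert ⟨i, hi⟩ = p.vert ⟨k + i, by omega⟩) ∧
    (∀ (i : ℕ) (hi : i < q.len), q.edge ⟨i, hi⟩ = p.edge ⟨k + i, by omega⟩)

/-- `r` is the path `p` extended (at its end) by the edge `e` to the vertex `l`;
that is, `r = p · (tgt p, e, l)`. -/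
def ExtendsBy (r p : G.Walk) (e : E) (l : V) : Prop :=
  ∃ hlen : r.len = p.len + 1,
    (∀ (i : ℕ) (hi : i < p.len + 1), r.vert ⟨i, by omega⟩ = p.vert ⟨i, hi⟩) ∧
    (∀ (i : ℕ) (hi : i < p.len), r.edge ⟨i, by omega⟩ = p.edge ⟨i, hi⟩) ∧
    r.edge ⟨p.len, by omega⟩ = e ∧ r.vert ⟨p.len + 1, by omega⟩ = l

/-- `r` is the path obtained by prefixing `p` with the edge `e`;
that is, `r = (src r, e, src p) · p`. -/
def ConsOf (r : G.Walk) (e : E) (p : G.Walk) : Prop :=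
  ∃ hlen : r.len = p.len + 1,
    r.edge ⟨0, by omega⟩ = e ∧
    (∀ (i : ℕ) (hi : i < p.len + 1), r.vert ⟨i + 1, by omega⟩ = p.vert ⟨i, hi⟩) ∧
    (∀ (i : ℕ) (hi : i < p.len), r.edge ⟨i + 1, by omega⟩ = p.edge ⟨i, hi⟩)

end Walk

/-- `(v, α)` is a cusp-point: two distinct edges incident to `v` both have
color `α` at `v`. -/
def IsCuspPoint (G : Multigraph V E) (c : E → V → C) (v : V) (α : C) : Prop :=
  ∃ e f : E, e ≠ f ∧ G.inc e v ∧ G.inc f v ∧ c e v = α ∧ c f v = α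

/-- `(v, α) ⇝_p (u, β)`: `p` is a simple open cusp-free path from `v` to `u`
whose starting color is not `α` and whose ending color is `β`. -/
def StepsTo (G : Multigraph V E) (c : E → V → C) (v : V) (α : C) (u : V) (β : C)
    (p : G.Walk) : Prop :=
  p.IsSimple ∧ p.IsOpen ∧ p.CuspFree c ∧ p.src = v ∧ p.tgt = u ∧
    p.StartColorNe c α ∧ p.EndColorIs c β

/-- `(v, α) ⇝ (u, β)`. -/
def Steps (G : Multigraph V E) (c : E → V → C) (v : V) (α : C) (u : V) (β : C) : Prop :=
  ∃ p : G.Walk, G.StepsTo c v α u β p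

/-- `(v, α) ⊳_p (u, β)`: `(v, α) ⇝_p (u, β)` and no `⇝`-path from `(u, β)`
ends on a vertex of `p`. -/
def TriPath (G : Multigraph V E) (c : E → V → C) (v : V) (α : C) (u : V) (β : C)
    (p : G.Walk) : Prop :=
  G.StepsTo c v α u β p ∧
    ∀ (x : V) (τ : C) (q : G.Walk), G.StepsTo c u β x τ q → ¬ p.MemV x

/-- `(v, α) ⊳ (u, β)`. -/
def Tri (G : Multigraph V E) (c : E → V → C) (v : V) (α : C) (u : V) (β : C) : Prop :=
  ∃ p : G.Walk, G.TriPath c v α u β p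

/-- A splitting vertex: every cycle containing `v` has a cusp at `v`. -/
def IsSplitting (G : Multigraph V E) (c : E → V → C) (v : V) : Prop :=
  ∀ ω : G.Walk, ω.IsCycle → ω.MemV v → ω.HasCuspAtV c v

/-- A set `P` of vertex-color pairs dominates cusp-points. -/
def Dominates (G : Multigraph V E) (c : E → V → C) (P : Set (V × C)) : Prop :=
  ∀ (v : V) (α : C), G.IsCuspPoint c v α →
    (v, α) ∈ P ∨ ∃ (u : V) (β : C), (u, β) ∈ P ∧ G.Tri c v α u β

/-- `𝔐(v)`: the set of cycles with source `v`, whose last and first edges do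
not make a cusp at `v`, with a minimal number of cusps among such cycles. -/
def MinCycles (G : Multigraph V E) (c : E → V → C) (v : V) : Set G.Walk :=
  {ω | ω.IsCycle ∧ ω.src = v ∧ ¬ ω.CuspIdx c 0 ∧
    ∀ ω' : G.Walk, ω'.IsCycle → ω'.src = v → ¬ ω'.CuspIdx c 0 →
      ω.cuspCount c ≤ ω'.cuspCount c}

/-- The one-edge path `(v, e, u)`. -/
def singleWalk (G : Multigraph V E) (e : E) (v u : V)
    (hends : ∀ w : V, G.inc e w ↔ w = v ∨ w = u) : G.Walk where
  len := 1
  vert := fun i => if (i : ℕ) = 0 then v else u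
  edge := fun _ => e
  incs := by
    intro i h w
    have hi : i = 0 := by omega
    subst hi
    simpa using hends w

/-- An alternating cycle with respect to an edge-coloring: a cycle whose
consecutive edges (including last and first) have different colors. -/
def Walk.IsAlternatingCycle (c : E → C) (p : G.Walk) : Prop :=
  p.IsCycle ∧
  (∀ (i : ℕ) (h : i + 1 < p.len), c (p.edge ⟨i, by omega⟩) ≠ c (p.edge ⟨i + 1, h⟩)) ∧
  (∀ h : 0 < p.len, c (p.edge ⟨p.len - 1, by omega⟩) ≠ c (p.edge ⟨0, h⟩))

/-- `a` and `b` are connected in `G − v` (by a path avoiding `v`). -/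
def ReachAvoiding (G : Multigraph V E) (v a b : V) : Prop :=
  ∃ p : G.Walk, p.src = a ∧ p.tgt = b ∧
    ∀ (i : ℕ) (h : i < p.len + 1), p.vert ⟨i, h⟩ ≠ v

/-- A perfect matching: every vertex is incident to exactly one edge of `F`. -/
def IsPerfectMatching (G : Multigraph V E) (F : Set E) : Prop :=
  ∀ v : V, ∃! e : E, e ∈ F ∧ G.inc e v

/-- A bridge: an edge contained in no cycle. -/
def IsBridge (G : Multigraph V E) (e : E) : Prop :=
  ¬ ∃ ω : G.Walk, ω.IsCycle ∧ ω.MemE e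

/-- A `φ`-conformal cycle: a cycle `ω` such that `φ x` is an edge of `ω`
for every vertex `x` of `ω`. -/
def ConformalCycle (G : Multigraph V E) (φ : V → E) (ω : G.Walk) : Prop :=
  ω.IsCycle ∧ ∀ x : V, ω.MemV x → ω.MemE (φ x)

/-- A sub-graph: sets of vertices and edges, each edge having its endpoints
among the vertices. -/
structure Subgraph (G : Multigraph V E) where
  verts : Set V
  edges : Set E
  edge_mem : ∀ e ∈ edges, ∀ w : V, G.inc e w → w ∈ verts

/-- The walk `p` lies inside the sub-graph `S`. -/
def Walk.InSub (p : G.Walk) (S : G.Subgraph) : Prop :=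
  (∀ (i : ℕ) (h : i < p.len + 1), p.vert ⟨i, h⟩ ∈ S.verts) ∧
  (∀ (i : ℕ) (h : i < p.len), p.edge ⟨i, h⟩ ∈ S.edges)

/-- `S` is `⇝`-connected: any two distinct vertices of `S` are related by `⇝`
along a path inside `S`, for any starting color constraint. -/
def Subgraph.StepConnected (c : E → V → C) (S : G.Subgraph) : Prop :=
  ∀ v ∈ S.verts, ∀ u ∈ S.verts, v ≠ u → ∀ α : C,
    ∃ (p : G.Walk) (β : C), p.InSub S ∧ G.StepsTo c v α u β p

/-- `S` is connected: non-empty, and any two of its vertices are joined by a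
path lying inside it. -/
def Subgraph.IsConnected (S : G.Subgraph) : Prop :=
  (S.verts.Nonempty ∨ S.edges.Nonempty) ∧
  ∀ a ∈ S.verts, ∀ b ∈ S.verts,
    ∃ p : G.Walk, p.InSub S ∧ p.src = a ∧ p.tgt = b

/-- The sub-graph consisting of the vertices and edges of a walk. -/
def Walk.toSub (p : G.Walk) : G.Subgraph where
  verts := {x | p.MemV x}
  edges := {e | p.MemE e}
  edge_mem := by
    rintro e ⟨i, h, rfl⟩ w hw
    rw [p.incs i h w] at hw
    rcases hw with h' | h'
    · exact ⟨i, by omega, h'.symm⟩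
    · exact ⟨i + 1, by omega, h'.symm⟩

/-- Union of sub-graphs. -/
def Subgraph.union (S R : G.Subgraph) : G.Subgraph where
  verts := S.verts ∪ R.verts
  edges := S.edges ∪ R.edges
  edge_mem := by
    rintro e (he | he) w hw
    · exact Or.inl (S.edge_mem e he w hw)
    · exact Or.inr (R.edge_mem e he w hw)

/-- Inclusion of sub-graphs. -/
def Subgraph.le (S T : G.Subgraph) : Prop := S.verts ⊆ T.verts ∧ S.edges ⊆ T.edges

/-- `S` is a union of cusp-free cycles. -/
def IsCuspFreeCycleUnion (G : Multigraph V E) (c : E → V → C) (S : G.Subgraph) : Prop :=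
  ∃ F : Set G.Walk, (∀ ω ∈ F, Walk.IsCycle ω ∧ Walk.CuspFree c ω) ∧
    S.verts = {x | ∃ ω ∈ F, Walk.MemV ω x} ∧
    S.edges = {e | ∃ ω ∈ F, Walk.MemE ω e}

/-- `𝕺`: the set of maximal connected unions of cusp-free cycles. -/
def MaxCFCU (G : Multigraph V E) (c : E → V → C) : Set (G.Subgraph) :=
  {S | G.IsCuspFreeCycleUnion c S ∧ S.IsConnected ∧
    ∀ T : G.Subgraph, G.IsCuspFreeCycleUnion c T → T.IsConnected → S.le T → T.le S}

end Multigraph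

/-- A finite directed loopless multigraph. -/
structure DirMultigraph (V : Type) (E : Type) where
  srcE : E → V
  tgtE : E → V
  ne : ∀ e : E, srcE e ≠ tgtE e

/-- The underlying undirected multigraph of a directed multigraph. -/
def DirMultigraph.toMultigraph {V E : Type} (D : DirMultigraph V E) : Multigraph V E where
  inc e w := w = D.srcE e ∨ w = D.tgtE e
  exists_two e := ⟨D.srcE e, D.tgtE e, D.ne e, fun _ => Iff.rfl⟩

/-- `v` is a turning vertex of the cycle `ω`: the two edges incident to `v`
in `ω` either both have source `v` or both have target `v`. -/
def DirMultigraph.TurningAt {V E : Type} (D : DirMultigraph V E)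
    (ω : D.toMultigraph.Walk) (v : V) : Prop :=
  (∃ (j : ℕ) (h1 : 0 < j) (h2 : j < ω.len),
      ω.vert ⟨j, by omega⟩ = v ∧
      ((D.srcE (ω.edge ⟨j - 1, by omega⟩) = v ∧ D.srcE (ω.edge ⟨j, h2⟩) = v) ∨
       (D.tgtE (ω.edge ⟨j - 1, by omega⟩) = v ∧ D.tgtE (ω.edge ⟨j, h2⟩) = v))) ∨
  (Multigraph.Walk.IsClosed ω ∧ Multigraph.Walk.src ω = v ∧
    ∃ h : 0 < ω.len,
      ((D.srcE (ω.edge ⟨ω.len - 1, by omega⟩) = v ∧ D.srcE (ω.edge ⟨0, h⟩) = v) ∨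
       (D.tgtE (ω.edge ⟨ω.len - 1, by omega⟩) = v ∧ D.tgtE (ω.edge ⟨0, h⟩) = v)))

namespace CuspMin
open Multigraph Multigraph.Walk

variable {V E C : Type} {G : Multigraph V E} {c : E → V → C}

/-- safe vertex accessor -/
def vtx (p : G.Walk) (t : ℕ) : V := p.vert ⟨min t p.len, by omega⟩

/-- safe edge accessor -/
def edg (p : G.Walk) (h : 0 < p.len) (t : ℕ) : E := p.edge ⟨min t (p.len - 1), by omega⟩

theorem vtx_eq (p : G.Walk) {t : ℕ} (h : t ≤ p.len) :
    vtx p t = p.vert ⟨t, by omega⟩ := by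
  have : min t p.len = t := by omega
  simp [vtx, this]

theorem edg_eq (p : G.Walk) (h0 : 0 < p.len) {t : ℕ} (h : t < p.len) :
    edg p h0 t = p.edge ⟨t, h⟩ := by
  have : min t (p.len - 1) = t := by omega
  simp [edg, this]

theorem src_eq (p : G.Walk) : p.src = vtx p 0 := by
  rw [vtx_eq p (by omega)]; rfl

theorem tgt_eq (p : G.Walk) : p.tgt = vtx p p.len := by
  rw [vtx_eq p (by omega)]; rfl

theorem incs' (p : G.Walk) (h0 : 0 < p.len) {t : ℕ} (h : t < p.len) (w : V) :
    G.inc (edg p h0 t) w ↔ (w = vtx p t ∨ w = vtx p (t + 1)) := by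
  rw [edg_eq p h0 h, vtx_eq p (by omega), vtx_eq p (by omega)]
  exact p.incs t h w

theorem cuspIdx_internal_iff (p : G.Walk) (h0 : 0 < p.len) {t : ℕ} (h1 : 0 < t)
    (h2 : t < p.len) :
    p.CuspIdx c t ↔ (edg p h0 (t - 1) ≠ edg p h0 t ∧
      c (edg p h0 (t - 1)) (vtx p t) = c (edg p h0 t) (vtx p t)) := by
  rw [edg_eq p h0 (by omega), edg_eq p h0 h2, vtx_eq p (by omega)]
  constructor
  · rintro ⟨u, α, H | H⟩
    · obtain ⟨_, _, hv, hne, hc1, hc2⟩ := H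
      refine ⟨hne, ?_⟩
      rw [hv, hc1, hc2]
    · omega
  · rintro ⟨hne, hc⟩
    exact ⟨p.vert ⟨t, by omega⟩, c (p.edge ⟨t, h2⟩) (p.vert ⟨t, by omega⟩),
      Or.inl ⟨h1, h2, rfl, hne, hc, rfl⟩⟩

theorem cuspIdx_zero_iff (p : G.Walk) (h0 : 0 < p.len) (hcl : p.IsClosed) :
    p.CuspIdx c 0 ↔ (edg p h0 (p.len - 1) ≠ edg p h0 0 ∧
      c (edg p h0 (p.len - 1)) (vtx p 0) = c (edg p h0 0) (vtx p 0)) := by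
  rw [edg_eq p h0 (by omega), edg_eq p h0 h0, ← src_eq]
  constructor
  · rintro ⟨u, α, H | H⟩
    · obtain ⟨h, _⟩ := H; omega
    · obtain ⟨-, -, hv, h, hne, hc1, hc2⟩ := H
      rw [hv]
      exact ⟨hne, by rw [hc1, hc2]⟩
  · rintro ⟨hne, hc⟩
    exact ⟨p.src, c (p.edge ⟨0, h0⟩) p.src, Or.inr ⟨rfl, hcl, rfl, h0, hne, hc, rfl⟩⟩

theorem not_cuspIdx_of_ge (p : G.Walk) {t : ℕ} (h : p.len ≤ t) (h0 : t ≠ 0) :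
    ¬ p.CuspIdx c t := by
  rintro ⟨u, α, H | H⟩
  · obtain ⟨_, _, _⟩ := H; omega
  · exact h0 H.1

theorem not_hasCusp (p : G.Walk) {v : V} (hz : ¬ p.CuspIdx c 0)
    (hint : ∀ t, 0 < t → t < p.len → vtx p t ≠ v) : ¬ p.HasCuspAtV c v := by
  rintro ⟨t, β, H | H⟩
  · obtain ⟨h1, h2, hv, _⟩ := H
    exact hint t h1 h2 (by rw [vtx_eq p (by omega)]; exact hv)
  · obtain ⟨rfl, h2, h3, h4⟩ := H
    exact hz ⟨v, β, Or.inr ⟨rfl, h2, h3, h4⟩⟩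

theorem cusp_finite (p : G.Walk) : {t : ℕ | p.CuspIdx c t}.Finite := by
  apply Set.Finite.subset (Set.finite_Iic p.len)
  rintro t ⟨u, α, H | H⟩
  · obtain ⟨_, h, _⟩ := H; exact Set.mem_Iic.2 (by omega)
  · simp [H.1]

theorem count_le (p p' : G.Walk) (f : ℕ → ℕ)
    (hmap : ∀ t, p'.CuspIdx c t → p.CuspIdx c (f t))
    (hinj : ∀ t t', p'.CuspIdx c t → p'.CuspIdx c t' → f t = f t' → t = t') :
    p'.cuspCount c ≤ p.cuspCount c := by
  unfold Multigraph.Walk.cuspCount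
  calc {t : ℕ | p'.CuspIdx c t}.ncard
      = (f '' {t : ℕ | p'.CuspIdx c t}).ncard := by
        refine (Set.ncard_image_of_injOn ?_).symm
        exact fun a ha b hb => hinj a b ha hb
    _ ≤ {t : ℕ | p.CuspIdx c t}.ncard := by
        apply Set.ncard_le_ncard _ (cusp_finite p)
        rintro s ⟨t, ht, rfl⟩
        exact hmap t ht

theorem count_lt (p p' : G.Walk) (f : ℕ → ℕ) (j : ℕ) (hj : p.CuspIdx c j)
    (hmap : ∀ t, p'.CuspIdx c t → p.CuspIdx c (f t) ∧ f t ≠ j)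
    (hinj : ∀ t t', p'.CuspIdx c t → p'.CuspIdx c t' → f t = f t' → t = t') :
    p'.cuspCount c < p.cuspCount c := by
  unfold Multigraph.Walk.cuspCount
  calc {t : ℕ | p'.CuspIdx c t}.ncard
      = (f '' {t : ℕ | p'.CuspIdx c t}).ncard := by
        refine (Set.ncard_image_of_injOn ?_).symm
        exact fun a ha b hb => hinj a b ha hb
    _ ≤ ({t : ℕ | p.CuspIdx c t} \ {j}).ncard := by
        apply Set.ncard_le_ncard _ (cusp_finite p).diff
        rintro s ⟨t, ht, rfl⟩
        exact ⟨(hmap t ht).1, (hmap t ht).2⟩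
    _ < {t : ℕ | p.CuspIdx c t}.ncard := by
        apply Set.ncard_lt_ncard _ (cusp_finite p)
        constructor
        · exact Set.diff_subset
        · intro hsub
          exact (hsub hj).2 rfl

/-- walk builder from ℕ-indexed data -/
def build (G : Multigraph V E) (L : ℕ) (fv : ℕ → V) (fe : ℕ → E)
    (H : ∀ t, t < L → ∀ w : V, G.inc (fe t) w ↔ (w = fv t ∨ w = fv (t + 1))) :
    G.Walk where
  len := L
  vert := fun p => fv p
  edge := fun p => fe p
  incs := fun i h w => H i h w

theorem build_len (G : Multigraph V E) (L : ℕ) (fv : ℕ → V) (fe : ℕ → E) (H) :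
    (build G L fv fe H).len = L := rfl

theorem build_vtx (G : Multigraph V E) (L : ℕ) (fv : ℕ → V) (fe : ℕ → E) (H)
    {t : ℕ} (h : t ≤ L) : vtx (build G L fv fe H) t = fv t := by
  rw [vtx_eq _ h]; rfl

theorem build_edg (G : Multigraph V E) (L : ℕ) (fv : ℕ → V) (fe : ℕ → E) (H)
    (h0 : 0 < (build G L fv fe H).len) {t : ℕ} (h : t < L) :
    edg (build G L fv fe H) h0 t = fe t := by
  rw [edg_eq _ h0 h]; rfl

end CuspMin
namespace CuspMin
open Multigraph Multigraph.Walk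

variable {V E C : Type} {G : Multigraph V E} {c : E → V → C}

/-- vertex function of the spliced cycle -/
def spV (ω q : G.Walk) (j i : ℕ) (t : ℕ) : V :=
  if t ≤ j then vtx ω t else if t ≤ j + q.len then vtx q (t - j)
  else vtx ω (t - j - q.len + i)

/-- edge function of the spliced cycle -/
def spE (ω q : G.Walk) (h0 : 0 < ω.len) (hq0 : 0 < q.len) (j i : ℕ) (t : ℕ) : E :=
  if t < j then edg ω h0 t else if t < j + q.len then edg q hq0 (t - j)
  else edg ω h0 (t - j - q.len + i)

theorem spV_1 (ω q : G.Walk) (j i : ℕ) {t : ℕ} (h : t ≤ j) :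
    spV ω q j i t = vtx ω t := by simp [spV, h]

theorem spV_2 (ω q : G.Walk) (j i : ℕ) (hju : vtx ω j = vtx q 0) {t : ℕ}
    (h1 : j ≤ t) (h2 : t ≤ j + q.len) : spV ω q j i t = vtx q (t - j) := by
  by_cases h3 : t ≤ j
  · have ht : t = j := by omega
    subst ht
    simp [spV, h3, Nat.sub_self, hju]
  · simp [spV, h3, h2]

theorem spV_3 (ω q : G.Walk) (j i : ℕ) (hq0 : 0 < q.len)
    (hqx : vtx q q.len = vtx ω i) {t : ℕ} (h : j + q.len ≤ t) :
    spV ω q j i t = vtx ω (t - j - q.len + i) := by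
  by_cases h3 : t ≤ j + q.len
  · have ht : t = j + q.len := by omega
    subst ht
    have h4 : ¬ (j + q.len ≤ j) := by omega
    simp [spV, h4, Nat.sub_self, hqx]
  · have h4 : ¬ t ≤ j := by omega
    simp [spV, h3, h4]

theorem spE_1 (ω q : G.Walk) (h0 : 0 < ω.len) (hq0 : 0 < q.len) (j i : ℕ) {t : ℕ}
    (h : t < j) : spE ω q h0 hq0 j i t = edg ω h0 t := by simp [spE, h]

theorem spE_2 (ω q : G.Walk) (h0 : 0 < ω.len) (hq0 : 0 < q.len) (j i : ℕ) {t : ℕ}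
    (h1 : j ≤ t) (h2 : t < j + q.len) : spE ω q h0 hq0 j i t = edg q hq0 (t - j) := by
  have h3 : ¬ t < j := by omega
  simp [spE, h3, h2]

theorem spE_3 (ω q : G.Walk) (h0 : 0 < ω.len) (hq0 : 0 < q.len) (j i : ℕ) {t : ℕ}
    (h : j + q.len ≤ t) : spE ω q h0 hq0 j i t = edg ω h0 (t - j - q.len + i) := by
  have h3 : ¬ t < j := by omega
  have h4 : ¬ t < j + q.len := by omega
  simp [spE, h3, h4]

/-- vertex function of the return cycle δ -/
def dlV (ω q : G.Walk) (i : ℕ) (t : ℕ) : V :=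
  if t ≤ q.len then vtx q t else vtx ω (i - (t - q.len))

/-- edge function of the return cycle δ -/
def dlE (ω q : G.Walk) (h0 : 0 < ω.len) (hq0 : 0 < q.len) (i : ℕ) (t : ℕ) : E :=
  if t < q.len then edg q hq0 t else edg ω h0 (i - 1 - (t - q.len))

theorem dlV_1 (ω q : G.Walk) (i : ℕ) {t : ℕ} (h : t ≤ q.len) :
    dlV ω q i t = vtx q t := by simp [dlV, h]

theorem dlV_2 (ω q : G.Walk) (i : ℕ) (hqx : vtx q q.len = vtx ω i) {t : ℕ}
    (h : q.len ≤ t) : dlV ω q i t = vtx ω (i - (t - q.len)) := by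
  by_cases h3 : t ≤ q.len
  · have ht : t = q.len := by omega
    subst ht
    simp [dlV, Nat.sub_self, hqx]
  · simp [dlV, h3]

theorem dlE_1 (ω q : G.Walk) (h0 : 0 < ω.len) (hq0 : 0 < q.len) (i : ℕ) {t : ℕ}
    (h : t < q.len) : dlE ω q h0 hq0 i t = edg q hq0 t := by simp [dlE, h]

theorem dlE_2 (ω q : G.Walk) (h0 : 0 < ω.len) (hq0 : 0 < q.len) (i : ℕ) {t : ℕ}
    (h : q.len ≤ t) : dlE ω q h0 hq0 i t = edg ω h0 (i - 1 - (t - q.len)) := by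
  have h3 : ¬ t < q.len := by omega
  simp [dlE, h3]

theorem cuspIdx_zero_or_lt (p : G.Walk) {t : ℕ} (h : p.CuspIdx c t) :
    t = 0 ∨ (0 < t ∧ t < p.len) := by
  rcases h with ⟨u, α, H | H⟩
  · obtain ⟨h1, h2, _⟩ := H; exact Or.inr ⟨h1, h2⟩
  · exact Or.inl H.1

end CuspMin
namespace CuspMin
open Multigraph Multigraph.Walk

variable {V E C : Type} {G : Multigraph V E} {c : E → V → C}

theorem main (G : Multigraph V E) (c : E → V → C)
    (ω q : G.Walk) (v u x : V) (α : C) (j i : ℕ)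
    (hcyc : ω.IsCycle) (hsrcv : ω.src = v) (hnz : ¬ ω.CuspIdx c 0)
    (h0 : 0 < ω.len) (hq0 : 0 < q.len)
    (hj1 : 0 < j) (hj2 : j < ω.len) (hju : vtx ω j = u)
    (hene : edg ω h0 (j-1) ≠ edg ω h0 j)
    (hca : c (edg ω h0 (j-1)) u = α) (hcb : c (edg ω h0 j) u = α)
    (hij : j < i) (hin : i ≤ ω.len) (hix : vtx ω i = x)
    (hqsimple : q.IsSimple) (hqopen : q.IsOpen) (hqcf : q.CuspFree c)
    (hqsrc : q.src = u) (hqstart : q.StartColorNe c α) (hqtgt : q.tgt = x)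
    (hdisj : ∀ w : V, q.MemV w → ω.MemV w → w = u ∨ w = x)
    (hcorner : i = ω.len → c (edg q hq0 (q.len-1)) x ≠ c (edg ω h0 0) x) :
    (∃ δ : G.Walk, δ.IsCycle ∧ δ.CuspFree c ∧ q.IsSubpathOf δ) ∨
    (∃ ω' : G.Walk, ω'.IsCycle ∧ ω'.src = v ∧ ¬ ω'.HasCuspAtV c v ∧
        ω'.cuspCount c < ω.cuspCount c) := by
  -- basic injectivity facts
  have hqinj : ∀ a b : ℕ, a ≤ q.len → b ≤ q.len → vtx q a = vtx q b → a = b := by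
    intro a b ha hb h
    have key : ∀ a b : ℕ, (ha : a ≤ q.len) → (hb : b ≤ q.len) → a < b →
        vtx q a = vtx q b → a = b := by
      intro a b ha hb hlt h
      have h' : q.vert ⟨a, by omega⟩ = q.vert ⟨b, by omega⟩ := by
        rw [← vtx_eq q ha, ← vtx_eq q hb]; exact h
      obtain ⟨ha0, hbm⟩ := hqsimple.2 a b (by omega) (by omega) hlt h'
      exfalso
      apply hqopen
      rw [src_eq, tgt_eq, ← ha0, ← hbm]
      exact h
    rcases lt_trichotomy a b with hlt | heq | hgt
    · exact key a b ha hb hlt h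
    · exact heq
    · exact (key b a hb ha hgt h.symm).symm
  have hwinj : ∀ a b : ℕ, a ≤ ω.len → b ≤ ω.len → vtx ω a = vtx ω b →
      a = b ∨ (a = 0 ∧ b = ω.len) ∨ (a = ω.len ∧ b = 0) := by
    intro a b ha hb h
    have key : ∀ a b : ℕ, (ha : a ≤ ω.len) → (hb : b ≤ ω.len) → a < b →
        vtx ω a = vtx ω b → a = 0 ∧ b = ω.len := by
      intro a b ha hb hlt h
      have h' : ω.vert ⟨a, by omega⟩ = ω.vert ⟨b, by omega⟩ := by
        rw [← vtx_eq ω ha, ← vtx_eq ω hb]; exact h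
      exact hcyc.1.2 a b (by omega) (by omega) hlt h'
    rcases lt_trichotomy a b with hlt | heq | hgt
    · exact Or.inr (Or.inl (key a b ha hb hlt h))
    · exact Or.inl heq
    · obtain ⟨h1, h2⟩ := key b a hb ha hgt h.symm
      exact Or.inr (Or.inr ⟨h2, h1⟩)
  have hweinj : ∀ a b : ℕ, a < ω.len → b < ω.len →
      edg ω h0 a = edg ω h0 b → a = b := by
    intro a b ha hb h
    rw [edg_eq ω h0 ha, edg_eq ω h0 hb] at h
    exact hcyc.1.1 a b ha hb h
  have hqeinj : ∀ a b : ℕ, a < q.len → b < q.len →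
      edg q hq0 a = edg q hq0 b → a = b := by
    intro a b ha hb h
    rw [edg_eq q hq0 ha, edg_eq q hq0 hb] at h
    exact hqsimple.1 a b ha hb h
  have hv0 : vtx ω 0 = v := by rw [← src_eq]; exact hsrcv
  have hvn : vtx ω ω.len = v := by rw [← tgt_eq, ← hcyc.2.1]; exact hsrcv
  have hqu : vtx q 0 = u := by rw [← src_eq]; exact hqsrc
  have hqx : vtx q q.len = x := by rw [← tgt_eq]; exact hqtgt
  have huv : u ≠ v := by
    intro he
    rcases hwinj j 0 (by omega) (by omega) (by rw [hju, hv0, he]) with h | h | h <;> omega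
  have hux : u ≠ x := by
    intro he; apply hqopen; rw [hqsrc, hqtgt, he]
  have hstart : c (edg q hq0 0) u ≠ α := by
    have h := hqstart hq0
    rw [hqsrc] at h
    rw [edg_eq q hq0 hq0]
    exact h
  have hdisj' : ∀ a b : ℕ, a ≤ q.len → b ≤ ω.len → vtx q a = vtx ω b →
      vtx q a = u ∨ vtx q a = x := by
    intro a b ha hb h
    exact hdisj _ ⟨a, by omega, (vtx_eq q ha).symm⟩
      ⟨b, by omega, by rw [← vtx_eq ω hb]; exact h.symm⟩
  have hxm : ∀ s : ℕ, s ≤ q.len → vtx q s = u → s = 0 := by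
    intro s hs h
    exact hqinj s 0 hs (by omega) (by rw [h, hqu])
  have hxm2 : ∀ s : ℕ, s ≤ q.len → vtx q s = x → s = q.len := by
    intro s hs h
    exact hqinj s q.len hs (by omega) (by rw [h, hqx])
  have hn2 : 2 ≤ ω.len := by omega
  have hnoshare : ∀ a b : ℕ, a < q.len → b < ω.len → edg q hq0 a ≠ edg ω h0 b := by
    intro a b ha hb he
    have e1 : vtx q a = vtx ω b ∨ vtx q a = vtx ω (b+1) :=
      (incs' ω h0 hb (vtx q a)).1 (by rw [← he]; exact (incs' q hq0 ha _).2 (Or.inl rfl))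
    have e2 : vtx q (a+1) = vtx ω b ∨ vtx q (a+1) = vtx ω (b+1) :=
      (incs' ω h0 hb (vtx q (a+1))).1
        (by rw [← he]; exact (incs' q hq0 ha _).2 (Or.inr rfl))
    have f1 : vtx q a = u ∨ vtx q a = x := by
      rcases e1 with h | h
      · exact hdisj' a b (by omega) (by omega) h
      · exact hdisj' a (b+1) (by omega) (by omega) h
    have ha0 : a = 0 := by
      rcases f1 with h | h
      · exact hxm a (by omega) h
      · have := hxm2 a (by omega) h; omega
    subst ha0
    have hqa : vtx q 0 = u := hqu
    -- u is an endpoint of the shared edge in ω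
    have e1' : u = vtx ω b ∨ u = vtx ω (b+1) := by
      rcases e1 with h | h
      · exact Or.inl (by rw [← hqa]; exact h)
      · exact Or.inr (by rw [← hqa]; exact h)
    rcases e1' with h | h
    · rcases hwinj b j (by omega) (by omega) (by rw [← h, hju]) with h' | h' | h'
      · apply hstart
        rw [he, h']
        exact hcb
      · omega
      · omega
    · rcases hwinj (b+1) j (by omega) (by omega) (by rw [← h, hju]) with h' | h' | h'
      · apply hstart
        rw [he]
        have : b = j - 1 := by omega
        rw [this]
        exact hca
      · omega
      · omega
  have hxvi : x = v → i = ω.len := by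
    intro h
    rcases hwinj i 0 hin (by omega) (by rw [hix, hv0, h]) with h' | h' | h' <;> omega
  have hxv : i = ω.len → x = v := by
    intro h; rw [← hix, h, hvn]
  -- the spliced cycle ω'
  have HH : ∀ t, t < j + q.len + (ω.len - i) → ∀ w : V,
      G.inc (spE ω q h0 hq0 j i t) w ↔
        (w = spV ω q j i t ∨ w = spV ω q j i (t+1)) := by
    intro t ht w
    have hju' : vtx ω j = vtx q 0 := by rw [hju, hqu]
    have hqx' : vtx q q.len = vtx ω i := by rw [hqx, hix]
    rcases Nat.lt_or_ge t j with h | h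
    · rw [spE_1 ω q h0 hq0 j i h, spV_1 ω q j i (by omega : t ≤ j),
        spV_1 ω q j i (by omega : t + 1 ≤ j)]
      exact incs' ω h0 (by omega) w
    rcases Nat.lt_or_ge t (j + q.len) with h2 | h2
    · rw [spE_2 ω q h0 hq0 j i h h2, spV_2 ω q j i hju' h (by omega),
        spV_2 ω q j i hju' (by omega) (by omega : t + 1 ≤ j + q.len),
        show t + 1 - j = t - j + 1 by omega]
      exact incs' q hq0 (by omega) w
    · rw [spE_3 ω q h0 hq0 j i h2, spV_3 ω q j i hq0 hqx' h2,
        spV_3 ω q j i hq0 hqx' (by omega : j + q.len ≤ t + 1),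
        show t + 1 - j - q.len + i = (t - j - q.len + i) + 1 by omega]
      exact incs' ω h0 (by omega) w
  set L := j + q.len + (ω.len - i) with hLdef
  set ω' : G.Walk := build G L (spV ω q j i) (spE ω q h0 hq0 j i) HH with hw'
  have hlen : ω'.len = L := rfl
  have hL0 : 0 < ω'.len := by rw [hlen]; omega
  have hv' : ∀ t : ℕ, t ≤ L → vtx ω' t = spV ω q j i t := by
    intro t ht; exact build_vtx G L _ _ HH ht
  have he' : ∀ t : ℕ, t < L → edg ω' hL0 t = spE ω q h0 hq0 j i t := by
    intro t ht; exact build_edg G L _ _ HH hL0 ht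
  have hju' : vtx ω j = vtx q 0 := by rw [hju, hqu]
  have hqx' : vtx q q.len = vtx ω i := by rw [hqx, hix]
  have hsrc' : ω'.src = v := by
    rw [src_eq, hv' 0 (by omega), spV_1 ω q j i (by omega : (0:ℕ) ≤ j), hv0]
  have htgt' : ω'.tgt = v := by
    rw [tgt_eq, hlen, hv' L (le_refl L), spV_3 ω q j i hq0 hqx' (by omega),
      show L - j - q.len + i = ω.len by omega, hvn]
  have hclosed' : ω'.IsClosed := by
    show ω'.src = ω'.tgt
    rw [hsrc', htgt']
  have hsimple' : ω'.IsSimple := by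
    constructor
    · -- edges
      intro a b ha hb heq
      have ha' : a < L := by omega
      have hb' : b < L := by omega
      rw [← edg_eq ω' hL0 ha, ← edg_eq ω' hL0 hb, he' a ha', he' b hb'] at heq
      rcases Nat.lt_or_ge a j with h1 | h1 <;> rcases Nat.lt_or_ge b j with k1 | k1
      · rw [spE_1 ω q h0 hq0 j i h1, spE_1 ω q h0 hq0 j i k1] at heq
        exact hweinj a b (by omega) (by omega) heq
      · rcases Nat.lt_or_ge b (j + q.len) with k2 | k2
        · rw [spE_1 ω q h0 hq0 j i h1, spE_2 ω q h0 hq0 j i k1 k2] at heq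
          exact absurd heq.symm (hnoshare (b - j) a (by omega) (by omega))
        · rw [spE_1 ω q h0 hq0 j i h1, spE_3 ω q h0 hq0 j i k2] at heq
          have := hweinj a (b - j - q.len + i) (by omega) (by omega) heq
          omega
      · rcases Nat.lt_or_ge a (j + q.len) with h2 | h2
        · rw [spE_2 ω q h0 hq0 j i h1 h2, spE_1 ω q h0 hq0 j i k1] at heq
          exact absurd heq (hnoshare (a - j) b (by omega) (by omega))
        · rw [spE_3 ω q h0 hq0 j i h2, spE_1 ω q h0 hq0 j i k1] at heq
          have := hweinj (a - j - q.len + i) b (by omega) (by omega) heq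
          omega
      · rcases Nat.lt_or_ge a (j + q.len) with h2 | h2 <;>
          rcases Nat.lt_or_ge b (j + q.len) with k2 | k2
        · rw [spE_2 ω q h0 hq0 j i h1 h2, spE_2 ω q h0 hq0 j i k1 k2] at heq
          have := hqeinj (a - j) (b - j) (by omega) (by omega) heq
          omega
        · rw [spE_2 ω q h0 hq0 j i h1 h2, spE_3 ω q h0 hq0 j i k2] at heq
          exact absurd heq (hnoshare (a - j) (b - j - q.len + i) (by omega) (by omega))
        · rw [spE_3 ω q h0 hq0 j i h2, spE_2 ω q h0 hq0 j i k1 k2] at heq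
          exact absurd heq.symm (hnoshare (b - j) (a - j - q.len + i) (by omega) (by omega))
        · rw [spE_3 ω q h0 hq0 j i h2, spE_3 ω q h0 hq0 j i k2] at heq
          have := hweinj (a - j - q.len + i) (b - j - q.len + i) (by omega) (by omega) heq
          omega
    · -- vertices
      intro a b ha hb hab heq
      have ha' : a ≤ L := by omega
      have hb' : b ≤ L := by omega
      rw [← vtx_eq ω' (by omega), ← vtx_eq ω' (by omega), hv' a ha', hv' b hb'] at heq
      have hgoal : a = 0 ∧ b = L → a = 0 ∧ b = ω'.len := by omega
      apply hgoal
      rcases le_or_gt a j with h1 | h1 <;> rcases le_or_gt b j with k1 | k1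
      · rw [spV_1 ω q j i h1, spV_1 ω q j i k1] at heq
        rcases hwinj a b (by omega) (by omega) heq with h | h | h <;> omega
      · rcases le_or_gt b (j + q.len) with k2 | k2
        · rw [spV_1 ω q j i h1, spV_2 ω q j i hju' (by omega) k2] at heq
          rcases hdisj' (b - j) a (by omega) (by omega) heq.symm with h | h
          · have := hxm (b - j) (by omega) h; omega
          · have hbm := hxm2 (b - j) (by omega) h
            have hax : vtx ω a = vtx ω i := by rw [heq, h, hix]
            rcases hwinj a i (by omega) (by omega) hax with h' | h' | h' <;> omega
        · rw [spV_1 ω q j i h1, spV_3 ω q j i hq0 hqx' (by omega)] at heq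
          rcases hwinj a (b - j - q.len + i) (by omega) (by omega) heq with h | h | h <;> omega
      · omega
      · rcases le_or_gt a (j + q.len) with h2 | h2 <;>
          rcases le_or_gt b (j + q.len) with k2 | k2
        · rw [spV_2 ω q j i hju' (by omega) h2, spV_2 ω q j i hju' (by omega) k2] at heq
          have := hqinj (a - j) (b - j) (by omega) (by omega) heq
          omega
        · rw [spV_2 ω q j i hju' (by omega) h2, spV_3 ω q j i hq0 hqx' (by omega)] at heq
          rcases hdisj' (a - j) (b - j - q.len + i) (by omega) (by omega) heq with h | h
          · have := hxm (a - j) (by omega) h; omega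
          · have ham := hxm2 (a - j) (by omega) h
            have hbx : vtx ω (b - j - q.len + i) = vtx ω i := by rw [← heq, h, hix]
            rcases hwinj (b - j - q.len + i) i (by omega) (by omega) hbx with h' | h' | h' <;> omega
        · omega
        · rw [spV_3 ω q j i hq0 hqx' (by omega), spV_3 ω q j i hq0 hqx' (by omega)] at heq
          rcases hwinj (a - j - q.len + i) (b - j - q.len + i) (by omega) (by omega) heq
            with h | h | h <;> omega
  have hcyc' : ω'.IsCycle := ⟨hsimple', hclosed', by omega⟩
  have hnz' : ¬ ω'.CuspIdx c 0 := by
    by_cases hiN : i = ω.len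
    · intro hcz
      rw [cuspIdx_zero_iff ω' hL0 hclosed'] at hcz
      have e1 : edg ω' hL0 (ω'.len - 1) = edg q hq0 (q.len - 1) := by
        rw [hlen, he' (L-1) (by omega), spE_2 ω q h0 hq0 j i (by omega) (by omega),
          show L - 1 - j = q.len - 1 by omega]
      have e2 : edg ω' hL0 0 = edg ω h0 0 := by
        rw [he' 0 (by omega), spE_1 ω q h0 hq0 j i hj1]
      have e3 : vtx ω' 0 = x := by
        rw [hv' 0 (by omega), spV_1 ω q j i (by omega), hv0, ← hxv hiN]
      rw [e1, e2, e3] at hcz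
      exact hcorner hiN hcz.2
    · intro hcz
      apply hnz
      rw [cuspIdx_zero_iff ω h0 hcyc.2.1]
      rw [cuspIdx_zero_iff ω' hL0 hclosed'] at hcz
      have e1 : edg ω' hL0 (ω'.len - 1) = edg ω h0 (ω.len - 1) := by
        rw [hlen, he' (L-1) (by omega), spE_3 ω q h0 hq0 j i (by omega),
          show L - 1 - j - q.len + i = ω.len - 1 by omega]
      have e2 : edg ω' hL0 0 = edg ω h0 0 := by
        rw [he' 0 (by omega), spE_1 ω q h0 hq0 j i hj1]
      have e3 : vtx ω' 0 = vtx ω 0 := by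
        rw [hv' 0 (by omega), spV_1 ω q j i (by omega)]
      rw [e1, e2, e3] at hcz
      exact hcz
  have hchar : ∀ t : ℕ, ω'.CuspIdx c t →
      (0 < t ∧ t < j ∧ ω.CuspIdx c t) ∨
      (j + q.len < t ∧ t < L ∧ ω.CuspIdx c (t - j - q.len + i)) ∨
      (i < ω.len ∧ t = j + q.len ∧
        c (edg q hq0 (q.len-1)) x = c (edg ω h0 i) x) := by
    intro t hct
    rcases cuspIdx_zero_or_lt ω' hct with rfl | ⟨ht1, ht2⟩
    · exact absurd hct hnz'
    · have ht2' : t < L := by omega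
      rw [cuspIdx_internal_iff ω' hL0 ht1 ht2] at hct
      rcases Nat.lt_or_ge t j with h | h
      · left
        refine ⟨ht1, h, ?_⟩
        rw [cuspIdx_internal_iff ω h0 ht1 (by omega)]
        rw [he' (t-1) (by omega), he' t (by omega), hv' t (by omega),
          spE_1 ω q h0 hq0 j i (by omega), spE_1 ω q h0 hq0 j i h,
          spV_1 ω q j i (by omega)] at hct
        exact hct
      rcases Nat.lt_or_ge t (j + q.len) with h2 | h2
      · rcases Nat.eq_or_lt_of_le h with h3 | h3
        · -- t = j
          exfalso
          rw [he' (t-1) (by omega), he' t (by omega), hv' t (by omega),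
            spE_1 ω q h0 hq0 j i (by omega), spE_2 ω q h0 hq0 j i h h2,
            spV_1 ω q j i (by omega), ← h3, show j - j = 0 by omega, hju] at hct
          exact hstart (by rw [← hct.2]; exact hca)
        · -- j < t < j + q.len
          exfalso
          rw [he' (t-1) (by omega), he' t (by omega), hv' t (by omega),
            spE_2 ω q h0 hq0 j i (by omega) (by omega), spE_2 ω q h0 hq0 j i (by omega) h2,
            spV_2 ω q j i hju' (by omega) (by omega),
            show t - 1 - j = t - j - 1 by omega] at hct
          exact hqcf (t - j) ((cuspIdx_internal_iff q hq0 (by omega) (by omega)).2 hct)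
      rcases Nat.eq_or_lt_of_le h2 with h3 | h3
      · -- t = j + q.len, and t < L forces i < ω.len
        right; right
        refine ⟨by omega, h3.symm, ?_⟩
        rw [he' (t-1) (by omega), he' t (by omega), hv' t (by omega),
          spE_2 ω q h0 hq0 j i (by omega) (by omega), spE_3 ω q h0 hq0 j i (by omega),
          spV_2 ω q j i hju' (by omega) (by omega),
          show t - 1 - j = q.len - 1 by omega, show t - j - q.len + i = i by omega,
          show t - j = q.len by omega, hqx] at hct
        exact hct.2
      · -- j + q.len < t < L
        right; left
        refine ⟨h3, ht2', ?_⟩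
        rw [cuspIdx_internal_iff ω h0 (by omega) (by omega)]
        rw [he' (t-1) (by omega), he' t (by omega), hv' t (by omega),
          spE_3 ω q h0 hq0 j i (by omega), spE_3 ω q h0 hq0 j i (by omega),
          spV_3 ω q j i hq0 hqx' (by omega),
          show t - 1 - j - q.len + i = t - j - q.len + i - 1 by omega] at hct
        exact hct
  have hjS : ω.CuspIdx c j := by
    rw [cuspIdx_internal_iff ω h0 hj1 hj2]
    refine ⟨hene, ?_⟩
    rw [hju, hca, hcb]
  have hNHC : ¬ ω'.HasCuspAtV c v := by
    apply not_hasCusp ω' hnz'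
    intro t h1 h2 hveq
    have h2' : t < L := by omega
    rw [hv' t (by omega)] at hveq
    rcases le_or_gt t j with h | h
    · rw [spV_1 ω q j i h] at hveq
      rcases hwinj t 0 (by omega) (by omega) (by rw [hveq, hv0]) with h' | h' | h' <;> omega
    rcases le_or_gt t (j + q.len) with h3 | h3
    · rw [spV_2 ω q j i hju' (by omega) h3] at hveq
      rcases hdisj' (t-j) 0 (by omega) (by omega) (by rw [hveq, hv0]) with h' | h'
      · exact huv (by rw [← h', hveq])
      · have ht := hxm2 (t-j) (by omega) h'
        have hxv' : x = v := by rw [← h', hveq]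
        have := hxvi hxv'
        omega
    · rw [spV_3 ω q j i hq0 hqx' (by omega)] at hveq
      rcases hwinj (t - j - q.len + i) 0 (by omega) (by omega)
        (by rw [hveq, hv0]) with h' | h' | h' <;> omega
  by_cases hEx : ∃ t0 : ℕ, j < t0 ∧ t0 ≤ i ∧ ω.CuspIdx c t0
  · right
    obtain ⟨t0, ht0a, ht0b, ht0c⟩ := hEx
    refine ⟨ω', hcyc', hsrc', hNHC, ?_⟩
    have hval : ∀ s : ℕ, ω'.CuspIdx c s →
        ((if s < j then s else if s = j + q.len then t0 else s - j - q.len + i) = s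
            ∧ 0 < s ∧ s < j) ∨
        ((if s < j then s else if s = j + q.len then t0 else s - j - q.len + i)
            = s - j - q.len + i ∧ j + q.len < s ∧ s < L ∧ ω.CuspIdx c (s - j - q.len + i)) ∨
        ((if s < j then s else if s = j + q.len then t0 else s - j - q.len + i) = t0
            ∧ s = j + q.len) := by
      intro s hs
      rcases hchar s hs with ⟨h1, h2, h3⟩ | ⟨h1, h2, h3⟩ | ⟨h1, h2, h3⟩
      · exact Or.inl ⟨if_pos h2, h1, h2⟩
      · refine Or.inr (Or.inl ⟨?_, h1, h2, h3⟩)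
        rw [if_neg (by omega), if_neg (by omega)]
      · refine Or.inr (Or.inr ⟨?_, h2⟩)
        rw [if_neg (by omega), if_pos h2]
    refine count_lt ω ω'
      (fun s => if s < j then s else if s = j + q.len then t0 else s - j - q.len + i)
      j hjS ?_ ?_
    · intro t ht
      rcases hchar t ht with ⟨h1, h2, h3⟩ | ⟨h1, h2, h3⟩ | ⟨h1, h2, h3⟩
      · simp only [if_pos h2]
        exact ⟨h3, by omega⟩
      · simp only [if_neg (show ¬ t < j by omega), if_neg (show t ≠ j + q.len by omega)]
        exact ⟨h3, by omega⟩
      · simp only [if_neg (show ¬ t < j by omega), if_pos h2]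
        exact ⟨ht0c, by omega⟩
    · intro t t' ht ht' heq
      rcases hval t ht with ⟨e, r1, r2⟩ | ⟨e, r1, r2, r3⟩ | ⟨e, r1⟩ <;>
        rcases hval t' ht' with ⟨e', s1, s2⟩ | ⟨e', s1, s2, s3⟩ | ⟨e', s1⟩ <;>
        beta_reduce at heq <;> rw [e, e'] at heq <;> omega
  · push_neg at hEx
    by_cases hBC : i < ω.len ∧ c (edg q hq0 (q.len-1)) x = c (edg ω h0 i) x
    · -- the cusp-free cycle δ = q · reverse(ω[j..i])
      left
      obtain ⟨hiN, hceq⟩ := hBC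
      have HD : ∀ t, t < q.len + (i - j) → ∀ w : V,
          G.inc (dlE ω q h0 hq0 i t) w ↔ (w = dlV ω q i t ∨ w = dlV ω q i (t+1)) := by
        intro t ht w
        rcases Nat.lt_or_ge t q.len with h | h
        · rw [dlE_1 ω q h0 hq0 i h, dlV_1 ω q i (by omega), dlV_1 ω q i (by omega)]
          exact incs' q hq0 h w
        · rw [dlE_2 ω q h0 hq0 i h, dlV_2 ω q i hqx' h, dlV_2 ω q i hqx' (by omega),
            show i - (t - q.len) = (i - 1 - (t - q.len)) + 1 by omega,
            show i - (t + 1 - q.len) = i - 1 - (t - q.len) by omega]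
          rw [incs' ω h0 (show i - 1 - (t - q.len) < ω.len by omega) w]
          tauto
      set δ : G.Walk := build G (q.len + (i - j)) (dlV ω q i) (dlE ω q h0 hq0 i) HD
        with hd'
      have hdlen : δ.len = q.len + (i - j) := rfl
      have hD0 : 0 < δ.len := by rw [hdlen]; omega
      have hdv : ∀ t : ℕ, t ≤ q.len + (i - j) → vtx δ t = dlV ω q i t := by
        intro t ht; exact build_vtx G _ _ _ HD ht
      have hde : ∀ t : ℕ, t < q.len + (i - j) → edg δ hD0 t = dlE ω q h0 hq0 i t := by
        intro t ht; exact build_edg G _ _ _ HD hD0 ht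
      have hdsrc : δ.src = u := by
        rw [src_eq, hdv 0 (by omega), dlV_1 ω q i (by omega), hqu]
      have hdtgt : δ.tgt = u := by
        rw [tgt_eq, hdlen, hdv _ le_rfl, dlV_2 ω q i hqx' (by omega),
          show i - (q.len + (i - j) - q.len) = j by omega, hju]
      have hdclosed : δ.IsClosed := by
        show δ.src = δ.tgt
        rw [hdsrc, hdtgt]
      have hdsimple : δ.IsSimple := by
        constructor
        · intro a b ha hb heq
          have ha' : a < q.len + (i - j) := by omega
          have hb' : b < q.len + (i - j) := by omega
          rw [← edg_eq δ hD0 ha, ← edg_eq δ hD0 hb, hde a ha', hde b hb'] at heq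
          rcases Nat.lt_or_ge a q.len with h1 | h1 <;> rcases Nat.lt_or_ge b q.len with k1 | k1
          · rw [dlE_1 ω q h0 hq0 i h1, dlE_1 ω q h0 hq0 i k1] at heq
            exact hqeinj a b h1 k1 heq
          · rw [dlE_1 ω q h0 hq0 i h1, dlE_2 ω q h0 hq0 i k1] at heq
            exact absurd heq (hnoshare a _ h1 (by omega))
          · rw [dlE_2 ω q h0 hq0 i h1, dlE_1 ω q h0 hq0 i k1] at heq
            exact absurd heq.symm (hnoshare b _ k1 (by omega))
          · rw [dlE_2 ω q h0 hq0 i h1, dlE_2 ω q h0 hq0 i k1] at heq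
            have := hweinj (i - 1 - (a - q.len)) (i - 1 - (b - q.len))
              (by omega) (by omega) heq
            omega
        · intro a b ha hb hab heq
          have ha' : a ≤ q.len + (i - j) := by omega
          have hb' : b ≤ q.len + (i - j) := by omega
          rw [← vtx_eq δ (by omega), ← vtx_eq δ (by omega), hdv a ha', hdv b hb'] at heq
          have hgoal : a = 0 ∧ b = q.len + (i - j) → a = 0 ∧ b = δ.len := by omega
          apply hgoal
          rcases le_or_gt a q.len with h1 | h1 <;> rcases le_or_gt b q.len with k1 | k1
          · rw [dlV_1 ω q i h1, dlV_1 ω q i k1] at heq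
            have := hqinj a b h1 k1 heq
            omega
          · rw [dlV_1 ω q i h1, dlV_2 ω q i hqx' (by omega)] at heq
            rcases hdisj' a (i - (b - q.len)) h1 (by omega) heq with h | h
            · have ha0 := hxm a h1 h
              have hs : vtx ω (i - (b - q.len)) = vtx ω j := by
                rw [← heq, h, ← hju]
              rcases hwinj (i - (b - q.len)) j (by omega) (by omega) hs with h' | h' | h' <;>
                omega
            · have ham := hxm2 a h1 h
              have hs : vtx ω (i - (b - q.len)) = vtx ω i := by
                rw [← heq, h, ← hix]
              rcases hwinj (i - (b - q.len)) i (by omega) (by omega) hs with h' | h' | h' <;>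
                omega
          · omega
          · rw [dlV_2 ω q i hqx' (by omega), dlV_2 ω q i hqx' (by omega)] at heq
            rcases hwinj (i - (a - q.len)) (i - (b - q.len)) (by omega) (by omega) heq
              with h' | h' | h' <;> omega
      have hdcf : δ.CuspFree c := by
        intro t hct
        rcases cuspIdx_zero_or_lt δ hct with rfl | ⟨ht1, ht2⟩
        · rw [cuspIdx_zero_iff δ hD0 hdclosed] at hct
          rw [hdlen, hde (q.len + (i - j) - 1) (by omega), hde 0 (by omega),
            dlE_2 ω q h0 hq0 i (by omega), dlE_1 ω q h0 hq0 i (by omega),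
            show i - 1 - (q.len + (i - j) - 1 - q.len) = j by omega,
            hdv 0 (by omega), dlV_1 ω q i (by omega), hqu] at hct
          exact hstart (by rw [← hct.2]; exact hcb)
        · have ht2' : t < q.len + (i - j) := by omega
          rw [cuspIdx_internal_iff δ hD0 ht1 ht2] at hct
          rcases Nat.lt_or_ge t q.len with h | h
          · rw [hde (t-1) (by omega), hde t (by omega), hdv t (by omega),
              dlE_1 ω q h0 hq0 i (by omega), dlE_1 ω q h0 hq0 i h,
              dlV_1 ω q i (by omega)] at hct
            exact hqcf t ((cuspIdx_internal_iff q hq0 ht1 h).2 hct)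
          rcases Nat.eq_or_lt_of_le h with h3 | h3
          · -- t = q.len : the junction at x
            rw [hde (t-1) (by omega), hde t (by omega), hdv t (by omega),
              dlE_1 ω q h0 hq0 i (by omega), dlE_2 ω q h0 hq0 i (by omega),
              dlV_1 ω q i (by omega), ← h3, Nat.sub_self, Nat.sub_zero, hqx] at hct
            have hnci := hEx i (by omega) (le_refl i)
            rw [cuspIdx_internal_iff ω h0 (by omega) hiN] at hnci
            have hA : edg ω h0 (i-1) ≠ edg ω h0 i := by
              intro hh
              have := hweinj (i-1) i (by omega) hiN hh
              omega
            have hB : c (edg ω h0 (i-1)) (vtx ω i) ≠ c (edg ω h0 i) (vtx ω i) :=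
              fun hb => hnci ⟨hA, hb⟩
            rw [hix] at hB
            exact hB ((hct.2).symm.trans hceq)
          · -- q.len < t
            rw [hde (t-1) (by omega), hde t (by omega), hdv t (by omega),
              dlE_2 ω q h0 hq0 i (by omega), dlE_2 ω q h0 hq0 i (by omega),
              dlV_2 ω q i hqx' (by omega),
              show i - 1 - (t - 1 - q.len) = i - (t - q.len) by omega] at hct
            apply hEx (i - (t - q.len)) (by omega) (by omega)
            rw [cuspIdx_internal_iff ω h0 (show 0 < i - (t - q.len) by omega)
              (show i - (t - q.len) < ω.len by omega)]
            rw [show i - (t - q.len) - 1 = i - 1 - (t - q.len) by omega]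
            exact ⟨(Ne.symm hct.1), hct.2.symm⟩
      refine ⟨δ, ⟨hdsimple, hdclosed, by omega⟩, hdcf, 0, by omega, ?_, ?_⟩
      · intro a hia
        have e : vtx δ (0 + a) = vtx q a := by
          rw [show 0 + a = a by omega, hdv a (by omega), dlV_1 ω q i (by omega)]
        rw [← vtx_eq q (show a ≤ q.len by omega), ← vtx_eq δ (by omega)]
        exact e.symm
      · intro a hia
        have e : edg δ hD0 (0 + a) = edg q hq0 a := by
          rw [show 0 + a = a by omega, hde a (by omega), dlE_1 ω q h0 hq0 i hia]
        rw [← edg_eq q hq0 hia, ← edg_eq δ hD0 (by omega)]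
        exact e.symm
    · right
      refine ⟨ω', hcyc', hsrc', hNHC, ?_⟩
      have hval : ∀ s : ℕ, ω'.CuspIdx c s →
          ((if s < j then s else s - j - q.len + i) = s ∧ 0 < s ∧ s < j) ∨
          ((if s < j then s else s - j - q.len + i) = s - j - q.len + i
              ∧ j + q.len < s ∧ s < L) := by
        intro s hs
        rcases hchar s hs with ⟨h1, h2, h3⟩ | ⟨h1, h2, h3⟩ | ⟨h1, h2, h3⟩
        · exact Or.inl ⟨if_pos h2, h1, h2⟩
        · exact Or.inr ⟨if_neg (by omega), h1, h2⟩
        · exact absurd ⟨h1, h3⟩ hBC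
      refine count_lt ω ω' (fun s => if s < j then s else s - j - q.len + i) j hjS ?_ ?_
      · intro t ht
        rcases hchar t ht with ⟨h1, h2, h3⟩ | ⟨h1, h2, h3⟩ | ⟨h1, h2, h3⟩
        · simp only [if_pos h2]
          exact ⟨h3, by omega⟩
        · simp only [if_neg (show ¬ t < j by omega)]
          exact ⟨h3, by omega⟩
        · exact absurd ⟨h1, h3⟩ hBC
      · intro t t' ht ht' heq
        rcases hval t ht with ⟨e, r1, r2⟩ | ⟨e, r1, r2⟩ <;>
          rcases hval t' ht' with ⟨e', s1, s2⟩ | ⟨e', s1, s2⟩ <;>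
          beta_reduce at heq <;> rw [e, e'] at heq <;> omega

end CuspMin
namespace CuspMin
open Multigraph Multigraph.Walk

variable {V E C : Type} {G : Multigraph V E} {c : E → V → C}

theorem main2 (G : Multigraph V E) (c : E → V → C)
    (ω q : G.Walk) (v u x : V) (α : C) (j i : ℕ)
    (hcyc : ω.IsCycle) (hsrcv : ω.src = v) (hnz : ¬ ω.CuspIdx c 0)
    (h0 : 0 < ω.len) (hq0 : 0 < q.len)
    (hj1 : 0 < j) (hj2 : j < ω.len) (hju : vtx ω j = u)
    (hene : edg ω h0 (j-1) ≠ edg ω h0 j)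
    (hca : c (edg ω h0 (j-1)) u = α) (hcb : c (edg ω h0 j) u = α)
    (hij : i < j) (hix : vtx ω i = x)
    (hqsimple : q.IsSimple) (hqopen : q.IsOpen) (hqcf : q.CuspFree c)
    (hqsrc : q.src = u) (hqstart : q.StartColorNe c α) (hqtgt : q.tgt = x)
    (hdisj : ∀ w : V, q.MemV w → ω.MemV w → w = u ∨ w = x)
    (hcorner : i = 0 → c (edg q hq0 (q.len-1)) x ≠ c (edg ω h0 (ω.len - 1)) x) :
    (∃ δ : G.Walk, δ.IsCycle ∧ δ.CuspFree c ∧ q.IsSubpathOf δ) ∨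
    (∃ ω' : G.Walk, ω'.IsCycle ∧ ω'.src = v ∧ ¬ ω'.HasCuspAtV c v ∧
        ω'.cuspCount c < ω.cuspCount c) := by
  have hwinj : ∀ a b : ℕ, a ≤ ω.len → b ≤ ω.len → vtx ω a = vtx ω b →
      a = b ∨ (a = 0 ∧ b = ω.len) ∨ (a = ω.len ∧ b = 0) := by
    intro a b ha hb h
    have key : ∀ a b : ℕ, (ha : a ≤ ω.len) → (hb : b ≤ ω.len) → a < b →
        vtx ω a = vtx ω b → a = 0 ∧ b = ω.len := by
      intro a b ha hb hlt h
      have h' : ω.vert ⟨a, by omega⟩ = ω.vert ⟨b, by omega⟩ := by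
        rw [← vtx_eq ω ha, ← vtx_eq ω hb]; exact h
      exact hcyc.1.2 a b (by omega) (by omega) hlt h'
    rcases lt_trichotomy a b with hlt | heq | hgt
    · exact Or.inr (Or.inl (key a b ha hb hlt h))
    · exact Or.inl heq
    · obtain ⟨h1, h2⟩ := key b a hb ha hgt h.symm
      exact Or.inr (Or.inr ⟨h2, h1⟩)
  have hweinj : ∀ a b : ℕ, a < ω.len → b < ω.len →
      edg ω h0 a = edg ω h0 b → a = b := by
    intro a b ha hb h
    rw [edg_eq ω h0 ha, edg_eq ω h0 hb] at h
    exact hcyc.1.1 a b ha hb h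
  have hv0 : vtx ω 0 = v := by rw [← src_eq]; exact hsrcv
  have hvn : vtx ω ω.len = v := by rw [← tgt_eq, ← hcyc.2.1]; exact hsrcv
  -- the reversed cycle
  have HR : ∀ t, t < ω.len → ∀ w : V,
      G.inc (edg ω h0 (ω.len - 1 - t)) w ↔
        (w = vtx ω (ω.len - t) ∨ w = vtx ω (ω.len - (t+1))) := by
    intro t ht w
    rw [show ω.len - (t+1) = ω.len - 1 - t by omega,
      show ω.len - t = (ω.len - 1 - t) + 1 by omega]
    rw [incs' ω h0 (show ω.len - 1 - t < ω.len by omega) w]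
    tauto
  set ωr : G.Walk := build G ω.len (fun t => vtx ω (ω.len - t))
    (fun t => edg ω h0 (ω.len - 1 - t)) HR with hrdef
  have hrlen : ωr.len = ω.len := rfl
  have hr0 : 0 < ωr.len := by rw [hrlen]; omega
  have hrv : ∀ t : ℕ, t ≤ ω.len → vtx ωr t = vtx ω (ω.len - t) := by
    intro t ht; exact build_vtx G _ _ _ HR ht
  have hre : ∀ t : ℕ, t < ω.len → edg ωr hr0 t = edg ω h0 (ω.len - 1 - t) := by
    intro t ht; exact build_edg G _ _ _ HR hr0 ht
  have hrsrc : ωr.src = v := by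
    rw [src_eq, hrv 0 (by omega), Nat.sub_zero, hvn]
  have hrtgt : ωr.tgt = v := by
    rw [tgt_eq, hrlen, hrv ω.len le_rfl, Nat.sub_self, hv0]
  have hrclosed : ωr.IsClosed := by show ωr.src = ωr.tgt; rw [hrsrc, hrtgt]
  have hrsimple : ωr.IsSimple := by
    constructor
    · intro a b ha hb heq
      have ha' : a < ω.len := by omega
      have hb' : b < ω.len := by omega
      rw [← edg_eq ωr hr0 ha, ← edg_eq ωr hr0 hb, hre a ha', hre b hb'] at heq
      have := hweinj _ _ (show ω.len - 1 - a < ω.len by omega)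
        (show ω.len - 1 - b < ω.len by omega) heq
      omega
    · intro a b ha hb hab heq
      have ha' : a ≤ ω.len := by omega
      have hb' : b ≤ ω.len := by omega
      rw [← vtx_eq ωr (by omega), ← vtx_eq ωr (by omega), hrv a ha', hrv b hb'] at heq
      rcases hwinj _ _ (by omega) (by omega) heq with h | h | h <;>
        (have : ωr.len = ω.len := hrlen) <;> omega
  have hrcyc : ωr.IsCycle := ⟨hrsimple, hrclosed, by omega⟩
  -- transfer of cusps
  have htr0 : ωr.CuspIdx c 0 ↔ ω.CuspIdx c 0 := by
    rw [cuspIdx_zero_iff ωr hr0 hrclosed, cuspIdx_zero_iff ω h0 hcyc.2.1]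
    rw [hrlen, hre (ω.len - 1) (by omega), hre 0 (by omega),
      show ω.len - 1 - (ω.len - 1) = 0 by omega, Nat.sub_zero,
      hrv 0 (by omega), Nat.sub_zero, hvn, hv0]
    constructor
    · exact fun h => ⟨Ne.symm h.1, h.2.symm⟩
    · exact fun h => ⟨Ne.symm h.1, h.2.symm⟩
  have htr1 : ∀ t : ℕ, 0 < t → t < ω.len →
      (ωr.CuspIdx c t ↔ ω.CuspIdx c (ω.len - t)) := by
    intro t h1 h2
    rw [cuspIdx_internal_iff ωr hr0 h1 (show t < ωr.len by omega),
      cuspIdx_internal_iff ω h0 (show 0 < ω.len - t by omega)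
        (show ω.len - t < ω.len by omega)]
    rw [hre (t-1) (by omega), hre t (by omega), hrv t (by omega),
      show ω.len - 1 - (t-1) = ω.len - t by omega,
      show ω.len - t - 1 = ω.len - 1 - t by omega]
    constructor
    · exact fun h => ⟨Ne.symm h.1, h.2.symm⟩
    · exact fun h => ⟨Ne.symm h.1, h.2.symm⟩
  have hcnt : ωr.cuspCount c = ω.cuspCount c := by
    have hg : ∀ s s' : ℕ, s < ω.len → s' < ω.len →
        (if s = 0 then 0 else ω.len - s) = (if s' = 0 then 0 else ω.len - s') →
        s = s' := by
      intro s s' hs hs' h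
      by_cases h1 : s = 0 <;> by_cases h2 : s' = 0 <;>
        simp only [h1, h2, if_pos, if_neg, if_true, if_false] at h <;> omega
    apply le_antisymm
    · refine count_le ω ωr (fun s => if s = 0 then 0 else ω.len - s) ?_ ?_
      · intro t ht
        rcases cuspIdx_zero_or_lt ωr ht with rfl | ⟨h1, h2⟩
        · simpa using htr0.1 ht
        · beta_reduce
          rw [if_neg (by omega)]
          exact (htr1 t h1 (by omega)).1 ht
      · intro t t' ht ht' heq
        beta_reduce at heq
        rcases cuspIdx_zero_or_lt ωr ht with rfl | ⟨h1, h2⟩ <;>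
          rcases cuspIdx_zero_or_lt ωr ht' with rfl | ⟨k1, k2⟩
        · rfl
        · exact hg 0 t' (by omega) (by omega) heq
        · exact hg t 0 (by omega) (by omega) heq
        · exact hg t t' (by omega) (by omega) heq
    · refine count_le ωr ω (fun s => if s = 0 then 0 else ω.len - s) ?_ ?_
      · intro t ht
        rcases cuspIdx_zero_or_lt ω ht with rfl | ⟨h1, h2⟩
        · simpa using htr0.2 ht
        · beta_reduce
          rw [if_neg (by omega)]
          have := (htr1 (ω.len - t) (by omega) (by omega))
          rw [show ω.len - (ω.len - t) = t by omega] at this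
          exact this.2 ht
      · intro t t' ht ht' heq
        beta_reduce at heq
        rcases cuspIdx_zero_or_lt ω ht with rfl | ⟨h1, h2⟩ <;>
          rcases cuspIdx_zero_or_lt ω ht' with rfl | ⟨k1, k2⟩
        · rfl
        · exact hg 0 t' (by omega) (by omega) heq
        · exact hg t 0 (by omega) (by omega) heq
        · exact hg t t' (by omega) (by omega) heq
  have hnzr : ¬ ωr.CuspIdx c 0 := fun h => hnz (htr0.1 h)
  -- cusp data in the reversed cycle
  have hjur : vtx ωr (ω.len - j) = u := by
    rw [hrv (ω.len - j) (by omega), show ω.len - (ω.len - j) = j by omega, hju]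
  have hener : edg ωr hr0 (ω.len - j - 1) ≠ edg ωr hr0 (ω.len - j) := by
    rw [hre (ω.len - j - 1) (by omega), hre (ω.len - j) (by omega),
      show ω.len - 1 - (ω.len - j - 1) = j by omega,
      show ω.len - 1 - (ω.len - j) = j - 1 by omega]
    exact Ne.symm hene
  have hcar : c (edg ωr hr0 (ω.len - j - 1)) u = α := by
    rw [hre (ω.len - j - 1) (by omega),
      show ω.len - 1 - (ω.len - j - 1) = j by omega]
    exact hcb
  have hcbr : c (edg ωr hr0 (ω.len - j)) u = α := by
    rw [hre (ω.len - j) (by omega),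
      show ω.len - 1 - (ω.len - j) = j - 1 by omega]
    exact hca
  have hixr : vtx ωr (ω.len - i) = x := by
    rw [hrv (ω.len - i) (by omega), show ω.len - (ω.len - i) = i by omega, hix]
  have hdisjr : ∀ w : V, q.MemV w → ωr.MemV w → w = u ∨ w = x := by
    intro w hqm hrm
    obtain ⟨t, ht, hvt⟩ := hrm
    have hw : vtx ωr t = w := by rw [vtx_eq ωr (by omega)]; exact hvt
    apply hdisj w hqm
    refine ⟨ω.len - t, by omega, ?_⟩
    rw [← vtx_eq ω (show ω.len - t ≤ ω.len by omega), ← hrv t (by omega)]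
    exact hw
  have hcornerr : ω.len - i = ωr.len →
      c (edg q hq0 (q.len - 1)) x ≠ c (edg ωr hr0 0) x := by
    intro he
    rw [hre 0 (by omega), Nat.sub_zero]
    apply hcorner
    omega
  rcases main G c ωr q v u x α (ω.len - j) (ω.len - i) hrcyc hrsrc hnzr hr0 hq0
    (by omega) (by omega) hjur hener hcar hcbr (by omega) (by omega) hixr
    hqsimple hqopen hqcf hqsrc hqstart hqtgt hdisjr
    (by rw [hrlen] at hcornerr ⊢; exact hcornerr) with H | H
  · exact Or.inl H
  · obtain ⟨ω'', a1, a2, a3, a4⟩ := H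
    rw [hcnt] at a4
    exact Or.inr ⟨ω'', a1, a2, a3, a4⟩

end CuspMin
open Multigraph in
/-- **Cusp Minimization.** -/
theorem cusp_minimization
    {V E C : Type} [Fintype V] [Fintype E] [Fintype C]
    (G : Multigraph V E) (c : E → V → C)
    (ω q : G.Walk) (v u x : V) (α : C)
    (hcyc : ω.IsCycle) (hsrc : ω.src = v)
    (hnocusp : ¬ ω.HasCuspAtV c v)
    (hcusp : ∃ j : ℕ, ω.CuspAt c j u α)
    (hqsimple : q.IsSimple) (hqopen : q.IsOpen)
    (hqcf : q.CuspFree c)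
    (hqsrc : q.src = u)
    (hqstart : q.StartColorNe c α)
    (hqtgt : q.tgt = x)
    (hxω : ω.MemV x)
    (hdisj : ∀ w : V, q.MemV w → ω.MemV w → w = u ∨ w = x) :
    (∃ δ : G.Walk, δ.IsCycle ∧ δ.CuspFree c ∧ q.IsSubpathOf δ) ∨
    (∃ ω' : G.Walk, ω'.IsCycle ∧ ω'.src = v ∧ ¬ ω'.HasCuspAtV c v ∧
        ω'.cuspCount c < ω.cuspCount c) := by
  open CuspMin in
  · have h0 : 0 < ω.len := hcyc.2.2
    have hq0 : 0 < q.len := by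
      rcases Nat.eq_zero_or_pos q.len with h | h
      · exfalso
        apply hqopen
        rw [src_eq, tgt_eq, h]
      · exact h
    obtain ⟨j, hcj⟩ := hcusp
    have hnz : ¬ ω.CuspIdx c 0 := by
      rintro ⟨u', α', H | H⟩
      · obtain ⟨h1, -⟩ := H
        exact absurd h1 (by omega)
      · apply hnocusp
        obtain ⟨-, hcl, hsu, rest⟩ := H
        have hue : u' = v := by rw [← hsu, hsrc]
        subst hue
        exact ⟨0, α', Or.inr ⟨rfl, hcl, hsu, rest⟩⟩
    have hjd : 0 < j ∧ j < ω.len ∧ vtx ω j = u ∧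
        (edg ω h0 (j-1) ≠ edg ω h0 j) ∧
        c (edg ω h0 (j-1)) u = α ∧ c (edg ω h0 j) u = α := by
      rcases hcj with H | H
      · obtain ⟨h1, h2, hv, hne, hc1, hc2⟩ := H
        refine ⟨h1, h2, ?_, ?_, ?_, ?_⟩
        · rw [vtx_eq ω (by omega)]; exact hv
        · rw [edg_eq ω h0 (by omega), edg_eq ω h0 h2]; exact hne
        · rw [edg_eq ω h0 (by omega)]; exact hc1
        · rw [edg_eq ω h0 h2]; exact hc2
      · exfalso
        apply hnocusp
        obtain ⟨hj0, hcl, hsu, rest⟩ := H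
        have hue : u = v := by rw [← hsu, hsrc]
        subst hue
        exact ⟨j, α, Or.inr ⟨hj0, hcl, hsu, rest⟩⟩
    obtain ⟨hj1, hj2, hju, hene, hca, hcb⟩ := hjd
    have hv0 : vtx ω 0 = v := by rw [← src_eq]; exact hsrc
    have hvn : vtx ω ω.len = v := by rw [← tgt_eq, ← hcyc.2.1]; exact hsrc
    obtain ⟨i0, hi0lt, hi0b⟩ := hxω
    have hix0 : vtx ω i0 = x := by rw [vtx_eq ω (by omega)]; exact hi0b
    have hux : u ≠ x := fun he => hqopen (by rw [hqsrc, hqtgt, he])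
    have hji0 : j ≠ i0 := fun he => hux (by rw [← hju, he, hix0])
    by_cases hxveq : x = v
    · by_cases hg : c (edg q hq0 (q.len - 1)) x = c (edg ω h0 0) x
      · -- splice on the other side, via the reversed cycle
        apply main2 G c ω q v u x α j 0 hcyc hsrc hnz h0 hq0 hj1 hj2 hju hene hca hcb
          (by omega) (by rw [hv0]; exact hxveq.symm)
          hqsimple hqopen hqcf hqsrc hqstart hqtgt hdisj
        intro hdum
        have hA : edg ω h0 (ω.len - 1) ≠ edg ω h0 0 := by
          intro hh
          rw [edg_eq ω h0 (by omega), edg_eq ω h0 h0] at hh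
          have := hcyc.1.1 (ω.len - 1) 0 (by omega) h0 hh
          omega
        have hB : c (edg ω h0 (ω.len - 1)) v ≠ c (edg ω h0 0) v := by
          intro hb
          apply hnz
          rw [cuspIdx_zero_iff ω h0 hcyc.2.1, hv0]
          exact ⟨hA, hb⟩
        rw [hxveq] at hg ⊢
        intro hh
        exact hB (hh.symm.trans hg)
      · exact main G c ω q v u x α j ω.len hcyc hsrc hnz h0 hq0 hj1 hj2 hju hene hca hcb
          hj2 le_rfl (by rw [hvn]; exact hxveq.symm)
          hqsimple hqopen hqcf hqsrc hqstart hqtgt hdisj (fun _ => hg)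
    · have hi0n : i0 ≠ ω.len := fun he => hxveq (by rw [← hix0, he, hvn])
      have hi00 : i0 ≠ 0 := fun he => hxveq (by rw [← hix0, he, hv0])
      rcases Nat.lt_or_ge j i0 with hlt | hge
      · exact main G c ω q v u x α j i0 hcyc hsrc hnz h0 hq0 hj1 hj2 hju hene hca hcb
          hlt (by omega) hix0 hqsimple hqopen hqcf hqsrc hqstart hqtgt hdisj
          (fun he => absurd he hi0n)
      · exact main2 G c ω q v u x α j i0 hcyc hsrc hnz h0 hq0 hj1 hj2 hju hene hca hcb
          (by omega) hix0 hqsimple hqopen hqcf hqsrc hqstart hqtgt hdisj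
          (fun he => absurd he hi00)
end

section
/- (Cusp Cycling) Let G be a locally colored graph, v a vertex of G, and ω a cycle in 𝔐(v). Assume ω contains a cusp (f1,κ,f2) of color α, and that there is a simple open cusp-free path q with source κ whose starting color is not α and whose target is a vertex of ω. Then there exists a cusp-free cycle of G containing κ. -/
namespace Multigraph

variable {V E C : Type} {G : Multigraph V E}

namespace Walk

/-- Totalized vertex function. -/
def V' (p : G.Walk) (i : ℕ) : V := p.vert ⟨min i p.len, by omega⟩

lemma V'_eq (p : G.Walk) {i : ℕ} (h : i ≤ p.len) (h' : i < p.len + 1) :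
    p.V' i = p.vert ⟨i, h'⟩ := by
  unfold V'
  congr 1
  exact Fin.ext (by simp [Nat.min_eq_left h])

/-- Totalized edge function. -/
def Ed (p : G.Walk) (h0 : 0 < p.len) (i : ℕ) : E := p.edge ⟨min i (p.len - 1), by omega⟩

lemma Ed_eq (p : G.Walk) (h0 : 0 < p.len) {i : ℕ} (h' : i < p.len) :
    p.Ed h0 i = p.edge ⟨i, h'⟩ := by
  unfold Ed
  congr 1
  exact Fin.ext (by simp; omega)

lemma incs' (p : G.Walk) (h0 : 0 < p.len) {i : ℕ} (h : i < p.len) (w : V) :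
    G.inc (p.Ed h0 i) w ↔ (w = p.V' i ∨ w = p.V' (i + 1)) := by
  rw [p.Ed_eq h0 h, p.V'_eq (by omega) (by omega), p.V'_eq (by omega) (by omega)]
  exact p.incs i h w

end Walk

/-- Constructor for walks from total functions. -/
def mk' (G : Multigraph V E) (L : ℕ) (F : ℕ → V) (Ee : ℕ → E)
    (h : ∀ i < L, ∀ w : V, G.inc (Ee i) w ↔ (w = F i ∨ w = F (i + 1))) : G.Walk :=
  ⟨L, fun i => F i.val, fun i => Ee i.val, fun i hi w => h i hi w⟩

@[simp] lemma mk'_len (G : Multigraph V E) (L F Ee h) : (mk' G L F Ee h).len = L := rfl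
@[simp] lemma mk'_vert (G : Multigraph V E) (L F Ee h) (i : Fin (L+1)) :
    (mk' G L F Ee h).vert i = F i.val := rfl
@[simp] lemma mk'_edge (G : Multigraph V E) (L F Ee h) (i : Fin L) :
    (mk' G L F Ee h).edge i = Ee i.val := rfl
@[simp] lemma mk'_V' (G : Multigraph V E) (L F Ee h) (i : ℕ) (hi : i ≤ L) :
    (mk' G L F Ee h).V' i = F i := by
  rw [Walk.V'_eq _ (by simpa using hi) (by simp; omega)]; rfl

/-- Cardinality comparison via an injection. -/
lemma ncard_le_of_inj (s t : Set ℕ) (f : ℕ → ℕ) (ht : t.Finite)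
    (hmap : ∀ i ∈ s, f i ∈ t) (hinj : Set.InjOn f s) : s.ncard ≤ t.ncard := by
  have h1 : f '' s ⊆ t := by rintro x ⟨i, hi, rfl⟩; exact hmap i hi
  calc s.ncard = (f '' s).ncard := (Set.ncard_image_of_injOn hinj).symm
    _ ≤ t.ncard := Set.ncard_le_ncard h1 ht

/-- Strict cardinality comparison via an injection missing an element. -/
lemma ncard_lt_of_inj (s t : Set ℕ) (f : ℕ → ℕ) (ht : t.Finite)
    (hmap : ∀ i ∈ s, f i ∈ t) (hinj : Set.InjOn f s) (a : ℕ) (hat : a ∈ t)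
    (hna : ∀ i ∈ s, f i ≠ a) : s.ncard < t.ncard := by
  have h1 : f '' s ⊆ t \ {a} := by
    rintro x ⟨i, hi, rfl⟩; exact ⟨hmap i hi, by simpa using hna i hi⟩
  calc s.ncard = (f '' s).ncard := (Set.ncard_image_of_injOn hinj).symm
    _ ≤ (t \ {a}).ncard := Set.ncard_le_ncard h1 ht.diff
    _ < t.ncard := Set.ncard_diff_singleton_lt_of_mem hat ht

lemma cusps_finite (c : E → V → C) (p : G.Walk) : {j : ℕ | p.CuspIdx c j}.Finite := by
  apply (Set.finite_Iio (p.len + 1)).subset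
  rintro j ⟨u, α, hj⟩
  rcases hj with ⟨h1, h2, _⟩ | ⟨rfl, _⟩ <;> simp <;> omega

lemma cusp_lt_len {c : E → V → C} {p : G.Walk} {j : ℕ} (h : p.CuspIdx c j) :
    j = 0 ∨ (0 < j ∧ j < p.len) := by
  obtain ⟨u, α, hj⟩ := h
  rcases hj with ⟨h1, h2, _⟩ | ⟨rfl, _⟩
  · right; omega
  · left; rfl

end Multigraph
namespace Multigraph

variable {V E C : Type} {G : Multigraph V E}

namespace Walk

lemma src_eq_V' (p : G.Walk) : p.src = p.V' 0 := (p.V'_eq (by omega) (by omega)).symm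

lemma memV_V' (p : G.Walk) {i : ℕ} (h : i ≤ p.len) : p.MemV (p.V' i) :=
  ⟨i, by omega, (p.V'_eq h (by omega)).symm⟩

lemma memV_iff (p : G.Walk) (x : V) : p.MemV x ↔ ∃ i ≤ p.len, p.V' i = x := by
  constructor
  · rintro ⟨i, h, rfl⟩; exact ⟨i, by omega, p.V'_eq (by omega) h⟩
  · rintro ⟨i, h, rfl⟩; exact p.memV_V' h

lemma vert_inj' {p : G.Walk} (hs : p.IsSimple) {i i' : ℕ} (hi : i ≤ p.len)
    (hi' : i' ≤ p.len) (h : p.V' i = p.V' i') :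
    i = i' ∨ (i = 0 ∧ i' = p.len) ∨ (i = p.len ∧ i' = 0) := by
  rw [p.V'_eq hi (by omega), p.V'_eq hi' (by omega)] at h
  rcases lt_trichotomy i i' with hlt | heq | hlt
  · have := hs.2 i i' (by omega) (by omega) hlt h
    right; left; exact this
  · left; exact heq
  · have := hs.2 i' i (by omega) (by omega) hlt h.symm
    right; right; exact ⟨this.2, this.1⟩

lemma edge_inj' {p : G.Walk} (hs : p.IsSimple) (h0 : 0 < p.len) {i i' : ℕ}
    (hi : i < p.len) (hi' : i' < p.len) (h : p.Ed h0 i = p.Ed h0 i') : i = i' := by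
  rw [p.Ed_eq h0 hi, p.Ed_eq h0 hi'] at h
  exact hs.1 i i' hi hi' h

lemma cuspIdx_int (p : G.Walk) (c : E → V → C) {i : ℕ} (h0 : 0 < p.len)
    (h1 : 0 < i) (h2 : i < p.len) :
    p.CuspIdx c i ↔ (p.Ed h0 (i-1) ≠ p.Ed h0 i ∧
      c (p.Ed h0 (i-1)) (p.V' i) = c (p.Ed h0 i) (p.V' i)) := by
  rw [p.Ed_eq h0 (show i-1 < p.len by omega), p.Ed_eq h0 h2,
    p.V'_eq (by omega : i ≤ p.len) (by omega)]
  constructor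
  · rintro ⟨u, α, hc⟩
    rcases hc with ⟨_, h2', hv, hne, ha, hb⟩ | ⟨h', _⟩
    · subst hv; exact ⟨hne, ha.trans hb.symm⟩
    · omega
  · rintro ⟨hne, hc⟩
    exact ⟨_, _, Or.inl ⟨h1, h2, rfl, hne, rfl, hc.symm⟩⟩

lemma cuspIdx_zero (p : G.Walk) (c : E → V → C) (h0 : 0 < p.len) :
    p.CuspIdx c 0 ↔ (p.IsClosed ∧ p.Ed h0 (p.len-1) ≠ p.Ed h0 0 ∧
      c (p.Ed h0 (p.len-1)) p.src = c (p.Ed h0 0) p.src) := by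
  rw [p.Ed_eq h0 (show p.len-1 < p.len by omega), p.Ed_eq h0 h0]
  constructor
  · rintro ⟨u, α, hc⟩
    rcases hc with ⟨h1, _, _⟩ | ⟨_, hcl, hv, _, hne, ha, hb⟩
    · omega
    · subst hv; exact ⟨hcl, hne, ha.trans hb.symm⟩
  · rintro ⟨hcl, hne, hc⟩
    exact ⟨p.src, _, Or.inr ⟨rfl, hcl, rfl, h0, hne, rfl, hc.symm⟩⟩

lemma cuspIdx_oob (p : G.Walk) (c : E → V → C) {i : ℕ} (h1 : 0 < i)
    (h2 : p.len ≤ i) : ¬ p.CuspIdx c i := by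
  rintro ⟨u, α, hc⟩
  rcases hc with ⟨_, _, _⟩ | ⟨h', _⟩ <;> omega

/-- endpoints of an edge of a walk, totalized. -/
lemma edge_ends (p : G.Walk) (h0 : 0 < p.len) {i : ℕ} (h : i < p.len) (w : V) :
    G.inc (p.Ed h0 i) w ↔ (w = p.V' i ∨ w = p.V' (i+1)) := p.incs' h0 h w

end Walk

lemma mk'_Ed (G : Multigraph V E) (L F Ee h) {i : ℕ} (hi : i < L) (h0 : 0 < (mk' G L F Ee h).len) :
    (mk' G L F Ee h).Ed h0 i = Ee i := by
  rw [Walk.Ed_eq _ h0 (by simpa using hi)]; rfl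

lemma mk'_src (G : Multigraph V E) (L F Ee h) : (mk' G L F Ee h).src = F 0 := rfl

lemma mk'_isSimple (G : Multigraph V E) (L F Ee h)
    (he : ∀ i j : ℕ, i < L → j < L → Ee i = Ee j → i = j)
    (hv : ∀ i j : ℕ, i < L + 1 → j < L + 1 → i < j → F i = F j → i = 0 ∧ j = L) :
    (mk' G L F Ee h).IsSimple :=
  ⟨fun i j hi hj hh => he i j hi hj hh, fun i j hi hj hij hh => hv i j hi hj hij hh⟩

end Multigraph
namespace Multigraph

variable {V E C : Type} {G : Multigraph V E}

/-- Reversed walk. -/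
def Walk.rev (p : G.Walk) (h0 : 0 < p.len) : G.Walk :=
  mk' G p.len (fun i => p.V' (p.len - i)) (fun i => p.Ed h0 (p.len - 1 - i)) (by
    intro i hi w
    rw [p.incs' h0 (show p.len - 1 - i < p.len by omega) w,
      show p.len - 1 - i + 1 = p.len - i by omega,
      show p.len - (i+1) = p.len - 1 - i by omega]
    tauto)

/-- Prefix of a walk. -/
def Walk.pre (p : G.Walk) (t : ℕ) (h0 : 0 < p.len) (ht : t ≤ p.len) : G.Walk :=
  mk' G t (fun i => p.V' i) (fun i => p.Ed h0 (min i (t-1))) (by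
    intro i hi w
    rw [show min i (t-1) = i by omega]
    exact p.incs' h0 (by omega) w)

end Multigraph
namespace Multigraph

variable {V E C : Type} {G : Multigraph V E}

lemma rev_len (p : G.Walk) (h0 : 0 < p.len) : (p.rev h0).len = p.len := rfl

lemma rev_V' (p : G.Walk) (h0 : 0 < p.len) (i : ℕ) (hi : i ≤ p.len) :
    (p.rev h0).V' i = p.V' (p.len - i) := by
  unfold Walk.rev; exact mk'_V' G _ _ _ _ i hi

lemma rev_Ed (p : G.Walk) (h0 : 0 < p.len) (i : ℕ) (hi : i < p.len)
    (h0' : 0 < (p.rev h0).len) :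
    (p.rev h0).Ed h0' i = p.Ed h0 (p.len - 1 - i) := by
  unfold Walk.rev at *; exact mk'_Ed G _ _ _ _ hi h0'

lemma pre_len (p : G.Walk) (t : ℕ) (h0 : 0 < p.len) (ht : t ≤ p.len) :
    (p.pre t h0 ht).len = t := rfl

lemma pre_V' (p : G.Walk) (t : ℕ) (h0 : 0 < p.len) (ht : t ≤ p.len) (i : ℕ) (hi : i ≤ t) :
    (p.pre t h0 ht).V' i = p.V' i := by
  unfold Walk.pre; exact mk'_V' G _ _ _ _ i hi

lemma pre_Ed (p : G.Walk) (t : ℕ) (h0 : 0 < p.len) (ht : t ≤ p.len) (i : ℕ) (hi : i < t)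
    (h0' : 0 < (p.pre t h0 ht).len) :
    (p.pre t h0 ht).Ed h0' i = p.Ed h0 i := by
  unfold Walk.pre at *
  rw [mk'_Ed G _ _ _ _ hi h0', show min i (t-1) = i by omega]

end Multigraph
namespace Multigraph

variable {V E C : Type} {G : Multigraph V E} (ω q : G.Walk)

/-- The cycle through `κ`: `q` followed by the arc of `ω` from `m` up to `j`. -/
def cyO (hn : 0 < ω.len) (ht : 0 < q.len) (j m : ℕ) (hm : m < j) (hj : j < ω.len)
    (hglue : q.V' q.len = ω.V' m) : G.Walk :=
  mk' G (q.len + (j - m))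
    (fun i => if i ≤ q.len then q.V' i else ω.V' (m + i - q.len))
    (fun i => if i < q.len then q.Ed ht i else ω.Ed hn (m + i - q.len))
    (by
      intro i hi w
      by_cases h : i < q.len
      · simp only [if_pos h, if_pos (show i ≤ q.len by omega),
          if_pos (show i+1 ≤ q.len by omega)]
        exact q.incs' ht h w
      · simp only [if_neg h, if_neg (show ¬ (i+1 ≤ q.len) by omega)]
        rw [ω.incs' hn (show m + i - q.len < ω.len by omega) w,
          show m + (i+1) - q.len = (m + i - q.len) + 1 by omega]
        by_cases h2 : i ≤ q.len
        · rw [if_pos h2, show i = q.len by omega, hglue,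
            show m + q.len - q.len = m by omega]
        · rw [if_neg h2])

/-- The cycle through `v`: `ω` from `0` to `m`, then `q` reversed, then `ω`
from `j` to the end. -/
def cyV (hn : 0 < ω.len) (ht : 0 < q.len) (j m : ℕ) (hm : m < j) (hj : j < ω.len)
    (hglue : q.V' q.len = ω.V' m) (hglue2 : q.V' 0 = ω.V' j) : G.Walk :=
  mk' G (m + q.len + (ω.len - j))
    (fun i => if i < m then ω.V' i else if i ≤ m + q.len then
        q.V' (q.len - (i - m)) else ω.V' (j + (i - m - q.len)))
    (fun i => if i < m then ω.Ed hn i else if i < m + q.len then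
        q.Ed ht (q.len - 1 - (i - m)) else ω.Ed hn (j + (i - m - q.len)))
    (by
      intro i hi w
      by_cases h1 : i < m
      · simp only [if_pos h1]
        rw [ω.incs' hn (show i < ω.len by omega) w]
        by_cases h2 : i + 1 < m
        · rw [if_pos h2]
        · rw [if_neg h2, if_pos (show i+1 ≤ m + q.len by omega),
            show q.len - (i + 1 - m) = q.len by omega, hglue,
            show i + 1 = m by omega]
      · by_cases h2 : i < m + q.len
        · simp only [if_neg h1, if_pos h2, if_neg (show ¬ (i+1 < m) by omega),
            if_pos (show i + 1 ≤ m + q.len by omega), if_neg (show ¬ (i < m) by omega),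
            if_pos (show i ≤ m + q.len by omega)]
          rw [q.incs' ht (show q.len - 1 - (i - m) < q.len by omega) w,
            show q.len - 1 - (i - m) + 1 = q.len - (i - m) by omega,
            show q.len - (i + 1 - m) = q.len - 1 - (i - m) by omega]
          tauto
        · simp only [if_neg h1, if_neg h2, if_neg (show ¬ (i + 1 < m) by omega),
            if_neg (show ¬ (i + 1 ≤ m + q.len) by omega), if_neg (show ¬ (i < m) by omega)]
          rw [ω.incs' hn (show j + (i - m - q.len) < ω.len by omega) w,
            show j + (i + 1 - m - q.len) = j + (i - m - q.len) + 1 by omega]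
          by_cases h3 : i ≤ m + q.len
          · rw [if_pos h3, show q.len - (i - m) = 0 by omega, hglue2,
              show i = m + q.len by omega, show j + (m + q.len - m - q.len) = j by omega]
          · rw [if_neg h3])

/-- The cycle (used when `u = v`): `ω` from `0` to `j`, then `q`. -/
def cyW (hn : 0 < ω.len) (ht : 0 < q.len) (j : ℕ) (hj : j < ω.len)
    (hglue2 : q.V' 0 = ω.V' j) : G.Walk :=
  mk' G (j + q.len)
    (fun i => if i ≤ j then ω.V' i else q.V' (i - j))
    (fun i => if i < j then ω.Ed hn i else q.Ed ht (i - j))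
    (by
      intro i hi w
      by_cases h : i < j
      · simp only [if_pos h, if_pos (show i ≤ j by omega)]
        rw [ω.incs' hn (show i < ω.len by omega) w]
        by_cases h2 : i + 1 ≤ j
        · rw [if_pos h2]
        · rw [if_neg h2, show i + 1 - j = 0 by omega, hglue2, show i + 1 = j by omega]
      · simp only [if_neg h, if_neg (show ¬ (i + 1 ≤ j) by omega)]
        rw [q.incs' ht (show i - j < q.len by omega) w,
          show i + 1 - j = (i - j) + 1 by omega]
        by_cases h2 : i ≤ j
        · rw [if_pos h2, show i = j by omega, show j - j = 0 by omega, hglue2]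
        · rw [if_neg h2])

end Multigraph
namespace Multigraph

variable {V E C : Type} {G : Multigraph V E} (ω q : G.Walk)
  (hn : 0 < ω.len) (ht : 0 < q.len) (j m : ℕ) (hm : m < j) (hj : j < ω.len)
  (hglue : q.V' q.len = ω.V' m) (hglue2 : q.V' 0 = ω.V' j)

lemma cyO_len : (cyO ω q hn ht j m hm hj hglue).len = q.len + (j - m) := rfl

lemma cyO_V' (i : ℕ) (hi : i ≤ q.len + (j - m)) :
    (cyO ω q hn ht j m hm hj hglue).V' i =
      if i ≤ q.len then q.V' i else ω.V' (m + i - q.len) := by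
  unfold cyO; exact mk'_V' G _ _ _ _ i hi

lemma cyO_Ed (i : ℕ) (hi : i < q.len + (j - m)) (h0 : 0 < (cyO ω q hn ht j m hm hj hglue).len) :
    (cyO ω q hn ht j m hm hj hglue).Ed h0 i =
      if i < q.len then q.Ed ht i else ω.Ed hn (m + i - q.len) := by
  unfold cyO at *; exact mk'_Ed G _ _ _ _ hi h0

lemma cyV_len : (cyV ω q hn ht j m hm hj hglue hglue2).len = m + q.len + (ω.len - j) := rfl

lemma cyV_V' (i : ℕ) (hi : i ≤ m + q.len + (ω.len - j)) :
    (cyV ω q hn ht j m hm hj hglue hglue2).V' i =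
      if i < m then ω.V' i else if i ≤ m + q.len then
        q.V' (q.len - (i - m)) else ω.V' (j + (i - m - q.len)) := by
  unfold cyV; exact mk'_V' G _ _ _ _ i hi

lemma cyV_Ed (i : ℕ) (hi : i < m + q.len + (ω.len - j))
    (h0 : 0 < (cyV ω q hn ht j m hm hj hglue hglue2).len) :
    (cyV ω q hn ht j m hm hj hglue hglue2).Ed h0 i =
      if i < m then ω.Ed hn i else if i < m + q.len then
        q.Ed ht (q.len - 1 - (i - m)) else ω.Ed hn (j + (i - m - q.len)) := by
  unfold cyV at *; exact mk'_Ed G _ _ _ _ hi h0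

lemma cyW_len : (cyW ω q hn ht j hj hglue2).len = j + q.len := rfl

lemma cyW_V' (i : ℕ) (hi : i ≤ j + q.len) :
    (cyW ω q hn ht j hj hglue2).V' i =
      if i ≤ j then ω.V' i else q.V' (i - j) := by
  unfold cyW; exact mk'_V' G _ _ _ _ i hi

lemma cyW_Ed (i : ℕ) (hi : i < j + q.len) (h0 : 0 < (cyW ω q hn ht j hj hglue2).len) :
    (cyW ω q hn ht j hj hglue2).Ed h0 i =
      if i < j then ω.Ed hn i else q.Ed ht (i - j) := by
  unfold cyW at *; exact mk'_Ed G _ _ _ _ hi h0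

end Multigraph
namespace Multigraph

lemma core {V E C : Type} {G : Multigraph V E} (c : E → V → C)
    (v κ u : V) (α : C) (ω : G.Walk) (hn : 0 < ω.len)
    (hωs : ω.IsSimple) (hωcl : ω.IsClosed) (hωsrc : ω.src = v)
    (hω0 : ¬ ω.CuspIdx c 0)
    (hmin : ∀ ω' : G.Walk, ω'.IsCycle → ω'.src = v → ¬ ω'.CuspIdx c 0 →
      ω.cuspCount c ≤ ω'.cuspCount c)
    (j m : ℕ) (hmj : m < j) (hjn : j < ω.len)
    (hvj : ω.V' j = κ) (hvm : ω.V' m = u)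
    (hc1 : c (ω.Ed hn (j-1)) κ = α) (hc2 : c (ω.Ed hn j) κ = α)
    (hee : ω.Ed hn (j-1) ≠ ω.Ed hn j)
    (q : G.Walk) (ht : 0 < q.len)
    (hqsimple : q.IsSimple) (hqcf : q.CuspFree c)
    (hqsrc : q.V' 0 = κ) (hqtgt : q.V' q.len = u) (hκu : κ ≠ u)
    (hqstart : c (q.Ed ht 0) κ ≠ α)
    (hqint : ∀ k, 0 < k → k < q.len → ¬ ω.MemV (q.V' k)) :
    ∃ δ : G.Walk, δ.IsCycle ∧ δ.CuspFree c ∧ δ.MemV κ := by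
  classical
  have hv0 : ω.V' 0 = v := by rw [← ω.src_eq_V']; exact hωsrc
  have hclosed : ω.V' ω.len = ω.V' 0 := by
    rw [← ω.src_eq_V', ω.V'_eq (le_refl _) (by omega)]; exact hωcl.symm
  have qInj : ∀ i i' : ℕ, i ≤ q.len → i' ≤ q.len → q.V' i = q.V' i' → i = i' := by
    intro i i' hi hi' h
    rcases Walk.vert_inj' hqsimple hi hi' h with h' | ⟨h1, h2⟩ | ⟨h1, h2⟩
    · exact h'
    · subst h1; subst h2; rw [hqsrc, hqtgt] at h; exact absurd h hκu
    · subst h1; subst h2; rw [hqsrc, hqtgt] at h; exact absurd h.symm hκu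
  have hκj : ∀ i, i ≤ ω.len → ω.V' i = κ → i = j := by
    intro i hi h
    rcases Walk.vert_inj' hωs hi (by omega : j ≤ ω.len) (h.trans hvj.symm) with
      h' | ⟨h1, h2⟩ | ⟨h1, h2⟩
    · exact h'
    · omega
    · omega
  have hum : ∀ i, i ≤ ω.len → ω.V' i = u → i = m ∨ (m = 0 ∧ i = ω.len) := by
    intro i hi h
    rcases Walk.vert_inj' hωs hi (by omega : m ≤ ω.len) (h.trans hvm.symm) with
      h' | ⟨h1, h2⟩ | ⟨h1, h2⟩
    · exact Or.inl h'
    · omega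
    · exact Or.inr ⟨h2, h1⟩
  have eDisj : ∀ a, a < q.len → ∀ i, i < ω.len → q.Ed ht a ≠ ω.Ed hn i := by
    intro a ha i hi heq
    have hmem : ∀ x, (x = q.V' a ∨ x = q.V' (a+1)) → ω.MemV x := by
      intro x hx
      have h1 : G.inc (q.Ed ht a) x := (q.edge_ends ht ha x).mpr hx
      rw [heq, ω.edge_ends hn hi x] at h1
      rcases h1 with h1 | h1
      · rw [h1]; exact ω.memV_V' (by omega)
      · rw [h1]; exact ω.memV_V' (by omega)
    have ha0 : a = 0 := by
      by_contra h
      exact hqint a (by omega) ha (hmem _ (Or.inl rfl))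
    have hat : a + 1 = q.len := by
      by_contra h
      exact hqint (a+1) (by omega) (by omega) (hmem _ (Or.inr rfl))
    subst ha0
    have hκmem : G.inc (q.Ed ht 0) κ := (q.edge_ends ht ha κ).mpr (Or.inl hqsrc.symm)
    rw [heq, ω.edge_ends hn hi κ] at hκmem
    have hij : i = j ∨ i + 1 = j := by
      rcases hκmem with h | h
      · left; exact hκj i (by omega) h.symm
      · right; exact hκj (i+1) (by omega) h.symm
    rcases hij with h | h
    · rw [h] at heq; rw [← heq] at hc2; exact hqstart hc2
    · have h' : i = j - 1 := by omega
      rw [h'] at heq; rw [← heq] at hc1; exact hqstart hc1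
  have hωj : ω.CuspIdx c j := by
    rw [ω.cuspIdx_int c hn (by omega) hjn, hvj]
    exact ⟨hee, hc1.trans hc2.symm⟩
  set β := c (q.Ed ht (q.len - 1)) u with hβ
  have hglue : q.V' q.len = ω.V' m := hqtgt.trans hvm.symm
  have hglue2 : q.V' 0 = ω.V' j := hqsrc.trans hvj.symm
  -- the cycle through κ
  set Lo := q.len + (j - m) with hLodef
  set δo := cyO ω q hn ht j m hmj hjn hglue with hδodef
  have hδolen : δo.len = Lo := rfl
  have hδo0 : 0 < δo.len := by rw [hδolen]; omega
  have oV : ∀ i, i ≤ Lo → δo.V' i =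
      if i ≤ q.len then q.V' i else ω.V' (m + i - q.len) :=
    fun i hi => cyO_V' ω q hn ht j m hmj hjn hglue i hi
  have oE : ∀ i, i < Lo → δo.Ed hδo0 i =
      if i < q.len then q.Ed ht i else ω.Ed hn (m + i - q.len) :=
    fun i hi => cyO_Ed ω q hn ht j m hmj hjn hglue i hi hδo0
  have hδosrc : δo.src = κ := by
    rw [δo.src_eq_V', oV 0 (by omega), if_pos (by omega : (0:ℕ) ≤ q.len)]; exact hqsrc
  have hδosimple : δo.IsSimple := by
    apply mk'_isSimple
    · intro a b hA hB hEq
      by_cases h1 : a < q.len <;> by_cases h2 : b < q.len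
      · rw [if_pos h1, if_pos h2] at hEq
        exact Walk.edge_inj' hqsimple ht h1 h2 hEq
      · rw [if_pos h1, if_neg h2] at hEq
        exact absurd hEq (eDisj a h1 _ (by omega))
      · rw [if_neg h1, if_pos h2] at hEq
        exact absurd hEq.symm (eDisj b h2 _ (by omega))
      · rw [if_neg h1, if_neg h2] at hEq
        have := Walk.edge_inj' hωs hn (show m + a - q.len < ω.len by omega)
          (show m + b - q.len < ω.len by omega) hEq
        omega
    · intro a b hA hB hab hEq
      by_cases h1 : a ≤ q.len <;> by_cases h2 : b ≤ q.len
      · rw [if_pos h1, if_pos h2] at hEq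
        exact absurd (qInj a b h1 h2 hEq) (by omega)
      · rw [if_pos h1, if_neg h2] at hEq
        -- q.V' a = ω.V' (m + b - q.len), with m < m+b-q.len ≤ j
        by_cases ha0 : a = 0
        · subst ha0
          rw [hqsrc] at hEq
          have := hκj (m + b - q.len) (by omega) hEq.symm
          exact ⟨rfl, by omega⟩
        · by_cases hat : a = q.len
          · subst hat
            rw [hglue] at hEq
            rcases Walk.vert_inj' hωs (show m ≤ ω.len by omega)
              (show m + b - q.len ≤ ω.len by omega) hEq with h' | ⟨h3, h4⟩ | ⟨h3, h4⟩
            · omega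
            · omega
            · omega
          · exact absurd (ω.memV_V' (show m + b - q.len ≤ ω.len by omega))
              (hEq ▸ hqint a (by omega) (by omega))
      · omega
      · rw [if_neg h1, if_neg h2] at hEq
        rcases Walk.vert_inj' hωs (show m + a - q.len ≤ ω.len by omega)
          (show m + b - q.len ≤ ω.len by omega) hEq with h' | ⟨h3, h4⟩ | ⟨h3, h4⟩ <;> omega
  have hδocl : δo.IsClosed := by
    have h2 : δo.tgt = δo.V' δo.len := (δo.V'_eq (le_refl _) (by omega)).symm
    rw [Walk.IsClosed, h2, hδolen, oV Lo (le_refl _), if_neg (by omega),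
      show m + Lo - q.len = j by omega, hδosrc, hvj]
  have hδoκ : δo.MemV κ := by
    rw [Walk.memV_iff]
    exact ⟨0, by omega, by rw [oV 0 (by omega), if_pos (by omega : (0:ℕ) ≤ q.len)]; exact hqsrc⟩
  have hδocusp : ∀ i, δo.CuspIdx c i →
      (i = q.len ∧ c (ω.Ed hn m) u = β) ∨
      (q.len < i ∧ i < Lo ∧ ω.CuspIdx c (m + i - q.len)) := by
    intro i hi
    rcases cusp_lt_len hi with rfl | ⟨hi1, hi2⟩
    · exfalso
      rw [δo.cuspIdx_zero c hδo0] at hi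
      obtain ⟨_, _, hcol⟩ := hi
      rw [hδolen] at hcol
      rw [oE (Lo - 1) (by omega), oE 0 (by omega), if_neg (by omega : ¬ (Lo - 1 < q.len)),
        if_pos ht, show m + (Lo - 1) - q.len = j - 1 by omega, hδosrc] at hcol
      rw [hc1] at hcol
      exact hqstart hcol.symm
    · rw [hδolen] at hi2
      rw [δo.cuspIdx_int c hδo0 hi1 (by rw [hδolen]; omega)] at hi
      obtain ⟨hne, hcol⟩ := hi
      rw [oE (i-1) (by omega), oE i (by omega)] at hne hcol
      rw [oV i (by omega)] at hcol
      by_cases hc : i < q.len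
      · exfalso
        rw [if_pos (by omega : i - 1 < q.len), if_pos hc] at hne hcol
        rw [if_pos (by omega : i ≤ q.len)] at hcol
        have : q.CuspIdx c i := by
          rw [q.cuspIdx_int c ht hi1 hc]
          exact ⟨hne, hcol⟩
        exact hqcf i this
      · by_cases hct : i = q.len
        · left
          refine ⟨hct, ?_⟩
          rw [if_pos (by omega : i - 1 < q.len), if_neg (by omega : ¬ i < q.len)] at hcol
          rw [if_pos (by omega : i ≤ q.len)] at hcol
          rw [hct, show m + q.len - q.len = m by omega, hqtgt] at hcol
          rw [hβ]
          exact hcol.symm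
        · right
          refine ⟨by omega, by omega, ?_⟩
          rw [if_neg (by omega : ¬ (i - 1 < q.len)), if_neg (by omega : ¬ i < q.len)]
            at hne hcol
          rw [if_neg (by omega : ¬ i ≤ q.len)] at hcol
          rw [ω.cuspIdx_int c hn (by omega) (by omega)]
          rw [show m + i - q.len - 1 = m + (i-1) - q.len by omega]
          exact ⟨hne, hcol⟩
  by_cases hfree : δo.CuspFree c
  · exact ⟨δo, ⟨hδosimple, hδocl, hδo0⟩, hfree, hδoκ⟩
  exfalso
  obtain ⟨i0, hi0⟩ : ∃ i, δo.CuspIdx c i := by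
    by_contra h
    push_neg at h
    exact hfree h
  have hkey : c (ω.Ed hn m) u = β ∨ ∃ p, m < p ∧ p < j ∧ ω.CuspIdx c p := by
    rcases hδocusp i0 hi0 with ⟨h1, h2⟩ | ⟨h1, h2, h3⟩
    · exact Or.inl h2
    · exact Or.inr ⟨m + i0 - q.len, by omega, by omega, h3⟩
  -- the competitor cycle through v
  set Lv := m + q.len + (ω.len - j) with hLvdef
  set δv := cyV ω q hn ht j m hmj hjn hglue hglue2 with hδvdef
  have hδvlen : δv.len = Lv := rfl
  have hδv0 : 0 < δv.len := by rw [hδvlen]; omega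
  have vV : ∀ i, i ≤ Lv → δv.V' i = if i < m then ω.V' i else if i ≤ m + q.len then
      q.V' (q.len - (i - m)) else ω.V' (j + (i - m - q.len)) :=
    fun i hi => cyV_V' ω q hn ht j m hmj hjn hglue hglue2 i hi
  have vE : ∀ i, i < Lv → δv.Ed hδv0 i = if i < m then ω.Ed hn i else if i < m + q.len then
      q.Ed ht (q.len - 1 - (i - m)) else ω.Ed hn (j + (i - m - q.len)) :=
    fun i hi => cyV_Ed ω q hn ht j m hmj hjn hglue hglue2 i hi hδv0
  have hδvsrc : δv.src = v := by
    rw [δv.src_eq_V', vV 0 (by omega)]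
    by_cases hm0 : 0 < m
    · rw [if_pos hm0, hv0]
    · rw [if_neg hm0, if_pos (by omega : (0:ℕ) ≤ m + q.len),
        show q.len - (0 - m) = q.len by omega, hglue, show m = 0 by omega, hv0]
  have hδvcl : δv.IsClosed := by
    have h2 : δv.tgt = δv.V' δv.len := (δv.V'_eq (le_refl _) (by omega)).symm
    rw [Walk.IsClosed, h2, hδvlen, vV Lv (le_refl _), if_neg (by omega),
      if_neg (by omega), show j + (Lv - m - q.len) = ω.len by omega, hclosed, hδvsrc, hv0]
  have hδvsimple : δv.IsSimple := by
    apply mk'_isSimple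
    · intro a b hA hB hEq
      by_cases h1 : a < m <;> by_cases h2 : b < m
      · rw [if_pos h1, if_pos h2] at hEq
        exact Walk.edge_inj' hωs hn (by omega) (by omega) hEq
      · rw [if_pos h1, if_neg h2] at hEq
        by_cases h3 : b < m + q.len
        · rw [if_pos h3] at hEq
          exact absurd hEq.symm (eDisj _ (by omega) _ (by omega))
        · rw [if_neg h3] at hEq
          have := Walk.edge_inj' hωs hn (by omega)
            (show j + (b - m - q.len) < ω.len by omega) hEq
          omega
      · rw [if_neg h1, if_pos h2] at hEq
        by_cases h3 : a < m + q.len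
        · rw [if_pos h3] at hEq
          exact absurd hEq (eDisj _ (by omega) _ (by omega))
        · rw [if_neg h3] at hEq
          have := Walk.edge_inj' hωs hn
            (show j + (a - m - q.len) < ω.len by omega) (by omega) hEq
          omega
      · rw [if_neg h1, if_neg h2] at hEq
        by_cases h3 : a < m + q.len <;> by_cases h4 : b < m + q.len
        · rw [if_pos h3, if_pos h4] at hEq
          have := Walk.edge_inj' hqsimple ht (by omega) (by omega) hEq
          omega
        · rw [if_pos h3, if_neg h4] at hEq
          exact absurd hEq (eDisj _ (by omega) _ (by omega))
        · rw [if_neg h3, if_pos h4] at hEq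
          exact absurd hEq.symm (eDisj _ (by omega) _ (by omega))
        · rw [if_neg h3, if_neg h4] at hEq
          have := Walk.edge_inj' hωs hn (show j + (a - m - q.len) < ω.len by omega)
            (show j + (b - m - q.len) < ω.len by omega) hEq
          omega
    · intro a b hA hB hab hEq
      by_cases h1 : a < m <;> by_cases h2 : b < m
      · rw [if_pos h1, if_pos h2] at hEq
        have := Walk.vert_inj' hωs (show a ≤ ω.len by omega) (show b ≤ ω.len by omega) hEq
        omega
      · rw [if_pos h1, if_neg h2] at hEq
        by_cases h3 : b ≤ m + q.len
        · rw [if_pos h3] at hEq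
          by_cases hbm : b = m
          · rw [hbm, show q.len - (m - m) = q.len by omega, hglue] at hEq
            have := Walk.vert_inj' hωs (show a ≤ ω.len by omega)
              (show m ≤ ω.len by omega) hEq
            omega
          · by_cases hbt : b = m + q.len
            · rw [hbt, show q.len - (m + q.len - m) = 0 by omega, hqsrc] at hEq
              have := hκj a (by omega) hEq
              omega
            · have hmem := ω.memV_V' (show a ≤ ω.len by omega)
              rw [hEq] at hmem
              exact absurd hmem (hqint (q.len - (b - m)) (by omega) (by omega))
        · rw [if_neg h3] at hEq
          have := Walk.vert_inj' hωs (show a ≤ ω.len by omega)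
            (show j + (b - m - q.len) ≤ ω.len by omega) hEq
          rcases this with h' | ⟨h4, h5⟩ | ⟨h4, h5⟩
          · omega
          · exact ⟨h4, by omega⟩
          · omega
      · omega
      · rw [if_neg h1, if_neg h2] at hEq
        by_cases h3 : a ≤ m + q.len <;> by_cases h4 : b ≤ m + q.len
        · rw [if_pos h3, if_pos h4] at hEq
          have := qInj _ _ (by omega) (by omega) hEq
          omega
        · rw [if_pos h3, if_neg h4] at hEq
          by_cases ham : a = m
          · rw [ham, show q.len - (m - m) = q.len by omega, hglue] at hEq
            have := Walk.vert_inj' hωs (show m ≤ ω.len by omega)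
              (show j + (b - m - q.len) ≤ ω.len by omega) hEq
            rcases this with h' | ⟨h5, h6⟩ | ⟨h5, h6⟩
            · omega
            · exact ⟨by omega, by omega⟩
            · omega
          · by_cases hat : a = m + q.len
            · rw [hat, show q.len - (m + q.len - m) = 0 by omega, hqsrc] at hEq
              have := hκj _ (by omega) hEq.symm
              omega
            · have hmem := ω.memV_V' (show j + (b - m - q.len) ≤ ω.len by omega)
              rw [← hEq] at hmem
              exact absurd hmem (hqint _ (by omega) (by omega))
        · omega
        · rw [if_neg h3, if_neg h4] at hEq
          have := Walk.vert_inj' hωs (show j + (a - m - q.len) ≤ ω.len by omega)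
            (show j + (b - m - q.len) ≤ ω.len by omega) hEq
          omega
  have hδv0cusp : (m = 0 → c (ω.Ed hn (ω.len - 1)) u ≠ β) → ¬ δv.CuspIdx c 0 := by
    intro hPv0 hcusp
    rw [δv.cuspIdx_zero c hδv0] at hcusp
    obtain ⟨_, hne0, hcol0⟩ := hcusp
    rw [hδvlen] at hne0 hcol0
    rw [vE (Lv - 1) (by omega), vE 0 (by omega)] at hne0 hcol0
    rw [if_neg (show ¬ (Lv - 1 < m) by omega), if_neg (show ¬ (Lv - 1 < m + q.len) by omega),
      show j + (Lv - 1 - m - q.len) = ω.len - 1 by omega] at hne0 hcol0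
    rw [hδvsrc] at hcol0
    by_cases hm0 : 0 < m
    · rw [if_pos hm0] at hne0 hcol0
      apply hω0
      rw [ω.cuspIdx_zero c hn]
      exact ⟨hωcl, hne0, by rw [hωsrc]; exact hcol0⟩
    · rw [if_neg hm0, if_pos (by omega : (0:ℕ) < m + q.len),
        show q.len - 1 - (0 - m) = q.len - 1 by omega] at hcol0
      have hu : u = v := by rw [← hvm, show m = 0 by omega, hv0]
      apply hPv0 (by omega)
      rw [hβ, hu]
      exact hcol0
  have hδvcusp : ∀ i, 0 < i → δv.CuspIdx c i →
      (i = m ∧ 0 < m ∧ c (ω.Ed hn (m - 1)) u = β) ∨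
      (0 < i ∧ i < m ∧ ω.CuspIdx c i) ∨
      (m + q.len < i ∧ i < Lv ∧ ω.CuspIdx c (j + (i - m - q.len))) := by
    intro i hi0 hi
    rcases cusp_lt_len hi with h | ⟨hi1, hi2⟩
    · omega
    rw [hδvlen] at hi2
    rw [δv.cuspIdx_int c hδv0 hi1 (by rw [hδvlen]; omega)] at hi
    obtain ⟨hne1, hcol1⟩ := hi
    rw [vE (i-1) (by omega), vE i (by omega)] at hne1 hcol1
    rw [vV i (by omega)] at hcol1
    by_cases hA : i < m
    · simp only [if_pos (show i - 1 < m by omega), if_pos hA] at hne1 hcol1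
      refine Or.inr (Or.inl ⟨hi0, hA, ?_⟩)
      rw [ω.cuspIdx_int c hn hi0 (by omega)]
      exact ⟨hne1, hcol1⟩
    by_cases hB : i = m
    · refine Or.inl ⟨hB, by omega, ?_⟩
      simp only [if_pos (show i - 1 < m by omega), if_neg (show ¬ i < m by omega),
        if_pos (show i < m + q.len by omega), if_pos (show i ≤ m + q.len by omega)] at hcol1
      rw [hB, show q.len - (m - m) = q.len by omega, hqtgt,
        show q.len - 1 - (m - m) = q.len - 1 by omega] at hcol1
      rw [hβ]
      exact hcol1
    by_cases hC : i < m + q.len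
    · exfalso
      simp only [if_neg (show ¬ (i - 1 < m) by omega), if_neg (show ¬ i < m by omega),
        if_pos (show i - 1 < m + q.len by omega), if_pos hC,
        if_pos (show i ≤ m + q.len by omega),
        show q.len - 1 - (i - 1 - m) = q.len - (i - m) by omega] at hne1 hcol1
      have hq : q.CuspIdx c (q.len - (i - m)) := by
        rw [q.cuspIdx_int c ht (by omega) (by omega),
          show q.len - (i - m) - 1 = q.len - 1 - (i - m) by omega]
        exact ⟨hne1.symm, hcol1.symm⟩
      exact hqcf _ hq
    by_cases hD : i = m + q.len
    · exfalso
      simp only [if_neg (show ¬ (i - 1 < m) by omega), if_neg (show ¬ i < m by omega),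
        if_pos (show i - 1 < m + q.len by omega), if_neg (show ¬ i < m + q.len by omega),
        if_pos (show i ≤ m + q.len by omega)] at hcol1
      rw [hD, show q.len - 1 - (m + q.len - 1 - m) = 0 by omega,
        show q.len - (m + q.len - m) = 0 by omega,
        show j + (m + q.len - m - q.len) = j by omega, hqsrc] at hcol1
      rw [hc2] at hcol1
      exact hqstart hcol1
    · refine Or.inr (Or.inr ⟨by omega, by omega, ?_⟩)
      simp only [if_neg (show ¬ (i - 1 < m) by omega), if_neg (show ¬ i < m by omega),
        if_neg (show ¬ (i - 1 < m + q.len) by omega), if_neg (show ¬ i < m + q.len by omega),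
        if_neg (show ¬ i ≤ m + q.len by omega)] at hne1 hcol1
      rw [ω.cuspIdx_int c hn (by omega) (by omega),
        show j + (i - m - q.len) - 1 = j + (i - 1 - m - q.len) by omega]
      exact ⟨hne1, hcol1⟩
  by_cases hsplit : m = 0 ∧ c (ω.Ed hn (ω.len - 1)) u = β
  · -- m = 0 and the other side of v is β-colored: use the cycle ω[0..j] · q
    obtain ⟨hm0, hPv⟩ := hsplit
    have hu : u = v := by rw [← hvm, hm0, hv0]
    have hPo : ¬ c (ω.Ed hn m) u = β := by
      intro hPo
      apply hω0
      rw [ω.cuspIdx_zero c hn]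
      refine ⟨hωcl, ?_, ?_⟩
      · intro hcontr
        have := Walk.edge_inj' hωs hn (by omega) (by omega) hcontr
        omega
      · rw [hωsrc, ← hu, hPv]
        rw [hm0] at hPo
        rw [hPo]
    set Lw := j + q.len with hLwdef
    set δw := cyW ω q hn ht j hjn hglue2 with hδwdef
    have hδwlen : δw.len = Lw := rfl
    have hδw0 : 0 < δw.len := by rw [hδwlen]; omega
    have wV : ∀ i, i ≤ Lw → δw.V' i = if i ≤ j then ω.V' i else q.V' (i - j) :=
      fun i hi => cyW_V' ω q hn ht j hjn hglue2 i hi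
    have wE : ∀ i, i < Lw → δw.Ed hδw0 i = if i < j then ω.Ed hn i else q.Ed ht (i - j) :=
      fun i hi => cyW_Ed ω q hn ht j hjn hglue2 i hi hδw0
    have hδwsrc : δw.src = v := by
      rw [δw.src_eq_V', wV 0 (by omega), if_pos (by omega : (0:ℕ) ≤ j), hv0]
    have hδwcl : δw.IsClosed := by
      have h2 : δw.tgt = δw.V' δw.len := (δw.V'_eq (le_refl _) (by omega)).symm
      rw [Walk.IsClosed, h2, hδwlen, wV Lw (le_refl _), if_neg (by omega),
        show Lw - j = q.len by omega, hqtgt, hu, hδwsrc]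
    have hδwsimple : δw.IsSimple := by
      apply mk'_isSimple
      · intro a b hA hB hEq
        by_cases h1 : a < j <;> by_cases h2 : b < j
        · rw [if_pos h1, if_pos h2] at hEq
          exact Walk.edge_inj' hωs hn (by omega) (by omega) hEq
        · rw [if_pos h1, if_neg h2] at hEq
          exact absurd hEq.symm (eDisj _ (by omega) _ (by omega))
        · rw [if_neg h1, if_pos h2] at hEq
          exact absurd hEq (eDisj _ (by omega) _ (by omega))
        · rw [if_neg h1, if_neg h2] at hEq
          have := Walk.edge_inj' hqsimple ht (show a - j < q.len by omega)
            (show b - j < q.len by omega) hEq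
          omega
      · intro a b hA hB hab hEq
        by_cases h1 : a ≤ j <;> by_cases h2 : b ≤ j
        · rw [if_pos h1, if_pos h2] at hEq
          have := Walk.vert_inj' hωs (show a ≤ ω.len by omega) (show b ≤ ω.len by omega) hEq
          omega
        · rw [if_pos h1, if_neg h2] at hEq
          by_cases hbt : b = Lw
          · rw [hbt, show Lw - j = q.len by omega, hqtgt,
              show u = ω.V' 0 by rw [← hvm, hm0]] at hEq
            have := Walk.vert_inj' hωs (show a ≤ ω.len by omega)
              (show (0:ℕ) ≤ ω.len by omega) hEq
            exact ⟨by omega, by omega⟩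
          · have hmem := ω.memV_V' (show a ≤ ω.len by omega)
            rw [hEq] at hmem
            exact absurd hmem (hqint (b - j) (by omega) (by omega))
        · omega
        · rw [if_neg h1, if_neg h2] at hEq
          have := qInj _ _ (by omega) (by omega) hEq
          omega
    have hδw0cusp : ¬ δw.CuspIdx c 0 := by
      intro hcusp
      rw [δw.cuspIdx_zero c hδw0] at hcusp
      obtain ⟨_, hne0, hcol0⟩ := hcusp
      rw [hδwlen] at hne0 hcol0
      rw [wE (Lw - 1) (by omega), wE 0 (by omega)] at hne0 hcol0
      rw [if_neg (show ¬ (Lw - 1 < j) by omega), if_pos (show 0 < j by omega),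
        show Lw - 1 - j = q.len - 1 by omega] at hne0 hcol0
      rw [hδwsrc, ← hu] at hcol0
      apply hPo
      rw [hm0, ← hcol0, hβ]
    have hδwcusp : ∀ i, 0 < i → δw.CuspIdx c i → (i < j ∧ ω.CuspIdx c i) := by
      intro i hi0 hi
      rcases cusp_lt_len hi with h | ⟨hi1, hi2⟩
      · omega
      rw [hδwlen] at hi2
      rw [δw.cuspIdx_int c hδw0 hi1 (by rw [hδwlen]; omega)] at hi
      obtain ⟨hne1, hcol1⟩ := hi
      rw [wE (i-1) (by omega), wE i (by omega)] at hne1 hcol1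
      rw [wV i (by omega)] at hcol1
      by_cases hA : i < j
      · rw [if_pos (by omega : i - 1 < j), if_pos hA] at hne1 hcol1
        rw [if_pos (by omega : i ≤ j)] at hcol1
        refine ⟨hA, ?_⟩
        rw [ω.cuspIdx_int c hn hi0 (by omega)]
        exact ⟨hne1, hcol1⟩
      by_cases hB : i = j
      · exfalso
        rw [if_pos (by omega : i - 1 < j), if_neg (by omega : ¬ i < j)] at hcol1
        rw [if_pos (by omega : i ≤ j)] at hcol1
        rw [hB, show j - j = 0 by omega, hvj] at hcol1
        rw [hc1] at hcol1
        exact hqstart hcol1.symm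
      · exfalso
        rw [if_neg (by omega : ¬ (i - 1 < j)), if_neg (by omega : ¬ i < j)] at hne1 hcol1
        rw [if_neg (by omega : ¬ i ≤ j)] at hcol1
        have hq : q.CuspIdx c (i - j) := by
          rw [q.cuspIdx_int c ht (by omega) (by omega),
            show i - j - 1 = i - 1 - j by omega]
          exact ⟨hne1, hcol1⟩
        exact hqcf _ hq
    have hcmp := hmin δw ⟨hδwsimple, hδwcl, hδw0⟩ hδwsrc hδw0cusp
    have hlt : {i : ℕ | δw.CuspIdx c i}.ncard < {i : ℕ | ω.CuspIdx c i}.ncard := by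
      refine ncard_lt_of_inj _ _ (fun i => i) (cusps_finite c ω) ?_ ?_ j hωj ?_
      · intro i hi
        simp only [Set.mem_setOf_eq] at hi ⊢
        have hi0 : 0 < i := by
          rcases Nat.eq_zero_or_pos i with h | h
          · exact absurd (h ▸ hi) hδw0cusp
          · exact h
        exact (hδwcusp i hi0 hi).2
      · intro i1 h1 i2 h2 hEq
        exact hEq
      · intro i hi
        simp only [Set.mem_setOf_eq] at hi
        have hi0 : 0 < i := by
          rcases Nat.eq_zero_or_pos i with h | h
          · exact absurd (h ▸ hi) hδw0cusp
          · exact h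
        have := (hδwcusp i hi0 hi).1
        omega
    rw [Walk.cuspCount, Walk.cuspCount] at hcmp
    omega
  · -- otherwise the competitor through v is valid
    have hPv0 : m = 0 → c (ω.Ed hn (ω.len - 1)) u ≠ β := fun h1 h2 => hsplit ⟨h1, h2⟩
    have hnc0 := hδv0cusp hPv0
    obtain ⟨c0, a, hc0m, hc0j, ham, haj, hac0, hacusp, hc0cusp⟩ :
        ∃ c0 a : ℕ, m ≤ c0 ∧ c0 ≤ j ∧ m ≤ a ∧ a ≤ j ∧ a ≠ c0 ∧ ω.CuspIdx c a ∧
          ((0 < m ∧ c (ω.Ed hn (m-1)) u = β) → ω.CuspIdx c c0) := by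
      by_cases hPo : c (ω.Ed hn m) u = β
      · refine ⟨m, j, le_refl _, by omega, by omega, le_refl _, by omega, hωj, ?_⟩
        rintro ⟨hm1, hcolm⟩
        rw [ω.cuspIdx_int c hn (by omega) (by omega), hvm]
        constructor
        · intro hcontr
          have := Walk.edge_inj' hωs hn (by omega) (by omega) hcontr
          omega
        · rw [show m - 1 = m - 1 from rfl, hcolm, hPo]
      · rcases hkey with hPo' | ⟨p, hp1, hp2, hp3⟩
        · exact absurd hPo' hPo
        · exact ⟨j, p, by omega, le_refl _, by omega, by omega, by omega, hp3, fun _ => hωj⟩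
    have hfv : ∀ i, δv.CuspIdx c i →
        (((if i < m then i else if i = m then c0 else j + (i - m - q.len)) = i
            ∧ 0 < i ∧ i < m) ∨
        ((if i < m then i else if i = m then c0 else j + (i - m - q.len)) = c0
            ∧ i = m ∧ 0 < m ∧ c (ω.Ed hn (m-1)) u = β) ∨
        ((if i < m then i else if i = m then c0 else j + (i - m - q.len))
            = j + (i - m - q.len) ∧ m + q.len < i ∧ i < Lv ∧
            ω.CuspIdx c (j + (i - m - q.len)))) := by
      intro i hi
      have hi0 : 0 < i := by
        rcases Nat.eq_zero_or_pos i with h | h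
        · exact absurd (h ▸ hi) hnc0
        · exact h
      rcases hδvcusp i hi0 hi with ⟨hB, hm1, hcolm⟩ | ⟨_, hA, hcusp⟩ | ⟨hC, hC2, hcusp⟩
      · exact Or.inr (Or.inl ⟨by simp only [if_neg (show ¬ i < m by omega), if_pos hB],
          hB, hm1, hcolm⟩)
      · exact Or.inl ⟨by simp only [if_pos hA], hi0, hA⟩
      · exact Or.inr (Or.inr ⟨by simp only [if_neg (show ¬ i < m by omega),
          if_neg (show ¬ i = m by omega)], hC, hC2, hcusp⟩)
    have hcmp := hmin δv ⟨hδvsimple, hδvcl, hδv0⟩ hδvsrc hnc0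
    have hlt : {i : ℕ | δv.CuspIdx c i}.ncard < {i : ℕ | ω.CuspIdx c i}.ncard := by
      refine ncard_lt_of_inj _ _
        (fun i => if i < m then i else if i = m then c0 else j + (i - m - q.len))
        (cusps_finite c ω) ?_ ?_ a hacusp ?_
      · intro i hi
        simp only [Set.mem_setOf_eq] at hi ⊢
        rcases hfv i hi with ⟨e1, e2, e3⟩ | ⟨e1, e2, e3, e4⟩ | ⟨e1, e2, e3, e4⟩
        · rw [e1]
          exact (hδvcusp i e2 hi).resolve_left (by omega) |>.resolve_right (by omega) |>.2.2
        · rw [e1]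
          exact hc0cusp ⟨e3, e4⟩
        · rw [e1]
          exact e4
      · intro i1 h1 i2 h2 hEq
        simp only [Set.mem_setOf_eq] at h1 h2
        simp only [] at hEq
        rcases hfv i1 h1 with ⟨e1, e2, e3⟩ | ⟨e1, e2, e3, e4⟩ | ⟨e1, e2, e3, e4⟩ <;>
          rcases hfv i2 h2 with ⟨g1, g2, g3⟩ | ⟨g1, g2, g3, g4⟩ | ⟨g1, g2, g3, g4⟩ <;>
          rw [e1, g1] at hEq <;> omega
      · intro i hi
        simp only [Set.mem_setOf_eq] at hi
        rcases hfv i hi with ⟨e1, e2, e3⟩ | ⟨e1, e2, e3, e4⟩ | ⟨e1, e2, e3, e4⟩ <;>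
          rw [e1] <;> omega
    rw [Walk.cuspCount, Walk.cuspCount] at hcmp
    omega


end Multigraph
open Multigraph in
/-- **Cusp Cycling.** -/
theorem cusp_cycling
    {V E C : Type} [Fintype V] [Fintype E] [Fintype C]
    (G : Multigraph V E) (c : E → V → C)
    (v κ : V) (α : C) (ω : G.Walk)
    (hω : ω ∈ G.MinCycles c v)
    (hcusp : ∃ j : ℕ, ω.CuspAt c j κ α)
    (q : G.Walk)
    (hqsimple : q.IsSimple) (hqopen : q.IsOpen)
    (hqcf : q.CuspFree c)
    (hqsrc : q.src = κ)
    (hqstart : q.StartColorNe c α)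
    (hqtgt : ω.MemV q.tgt) :
    ∃ δ : G.Walk, δ.IsCycle ∧ δ.CuspFree c ∧ δ.MemV κ := by
  classical
  obtain ⟨⟨hωsimple, hωcl, hn⟩, hωsrc, hω0, hmin⟩ := hω
  have hv0 : ω.V' 0 = v := by rw [← ω.src_eq_V']; exact hωsrc
  have hωtail : ω.V' ω.len = ω.V' 0 := by
    rw [← ω.src_eq_V', ω.V'_eq (le_refl _) (by omega)]; exact hωcl.symm
  -- extract the internal cusp at κ
  obtain ⟨j, hj⟩ := hcusp
  rcases hj with ⟨hj1, hjn, hjv, hjne, hja, hjb⟩ | hz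
  swap
  · obtain ⟨hj0, hrest⟩ := hz
    subst hj0
    exact absurd ⟨κ, α, Or.inr ⟨rfl, hrest⟩⟩ hω0
  have hvj : ω.V' j = κ := by rw [ω.V'_eq (by omega) (by omega)]; exact hjv
  have hc1 : c (ω.Ed hn (j-1)) κ = α := by rw [ω.Ed_eq hn (by omega)]; exact hja
  have hc2 : c (ω.Ed hn j) κ = α := by rw [ω.Ed_eq hn hjn]; exact hjb
  have hee : ω.Ed hn (j-1) ≠ ω.Ed hn j := by
    rw [ω.Ed_eq hn (by omega), ω.Ed_eq hn hjn]; exact hjne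
  -- basic facts about q
  have ht : 0 < q.len := by
    by_contra h
    apply hqopen
    rw [q.src_eq_V', show q.tgt = q.V' q.len from (q.V'_eq (le_refl _) (by omega)).symm,
      show q.len = 0 by omega]
  have hκ : q.V' 0 = κ := by rw [← q.src_eq_V']; exact hqsrc
  have htgt : q.tgt = q.V' q.len := (q.V'_eq (le_refl _) (by omega)).symm
  have hstart : c (q.Ed ht 0) κ ≠ α := by
    rw [q.Ed_eq ht (show 0 < q.len from ht), ← hqsrc]
    exact hqstart ht
  -- truncate q at its first return to ω
  have hex : ∃ i, 0 < i ∧ i ≤ q.len ∧ ω.MemV (q.V' i) :=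
    ⟨q.len, ht, le_refl _, htgt ▸ hqtgt⟩
  set t := Nat.find hex with htdef
  obtain ⟨ht0, htle, htmem⟩ := Nat.find_spec hex
  have htmin : ∀ i, 0 < i → i < t → ¬ ω.MemV (q.V' i) := by
    intro i h1 h2 hmem
    exact Nat.find_min hex h2 ⟨h1, by omega, hmem⟩
  set u := q.V' t with hudef
  have hκu : κ ≠ u := by
    intro h
    have h0t : q.V' 0 = q.V' t := by rw [hκ, ← hudef, h]
    rcases Walk.vert_inj' hqsimple (show 0 ≤ q.len by omega) htle h0t with h' | ⟨_, h'⟩ | ⟨h', _⟩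
    · omega
    · apply hqopen
      rw [hqsrc, htgt, ← h', ← hudef, ← h]
    · omega
  set q' := q.pre t ht htle with hq'def
  have hq'len : q'.len = t := rfl
  have ht' : 0 < q'.len := by rw [hq'len]; omega
  have pV : ∀ i, i ≤ t → q'.V' i = q.V' i := fun i hi => pre_V' q t ht htle i hi
  have pE : ∀ i, i < t → q'.Ed ht' i = q.Ed ht i := fun i hi => pre_Ed q t ht htle i hi ht'
  have hq'simple : q'.IsSimple := by
    apply mk'_isSimple
    · intro a b hA hB hEq
      rw [show min a (t-1) = a by omega, show min b (t-1) = b by omega] at hEq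
      exact Walk.edge_inj' hqsimple ht (by omega) (by omega) hEq
    · intro a b hA hB hab hEq
      have := Walk.vert_inj' hqsimple (show a ≤ q.len by omega) (show b ≤ q.len by omega) hEq
      omega
  have hq'cf : q'.CuspFree c := by
    intro i hi
    rcases cusp_lt_len hi with h | ⟨h1, h2⟩
    · subst h
      rw [q'.cuspIdx_zero c ht'] at hi
      obtain ⟨hcl, _⟩ := hi
      apply hκu
      have e1 : q'.src = κ := by rw [q'.src_eq_V', pV 0 (by omega), hκ]
      have e2 : q'.tgt = u := by
        rw [show q'.tgt = q'.V' q'.len from (q'.V'_eq (le_refl _) (by omega)).symm,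
          hq'len, pV t (le_refl _)]
      rw [← e1, ← e2]
      exact hcl
    · rw [hq'len] at h2
      rw [q'.cuspIdx_int c ht' h1 (by rw [hq'len]; exact h2)] at hi
      obtain ⟨hne, hcol⟩ := hi
      rw [pE (i-1) (by omega), pE i (by omega)] at hne hcol
      rw [pV i (by omega)] at hcol
      exact hqcf i ((q.cuspIdx_int c ht h1 (by omega)).mpr ⟨hne, hcol⟩)
  have hq'src : q'.V' 0 = κ := by rw [pV 0 (by omega)]; exact hκ
  have hq'tgt : q'.V' q'.len = u := by rw [hq'len, pV t (le_refl _)]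
  have hq'start : c (q'.Ed ht' 0) κ ≠ α := by rw [pE 0 (by omega)]; exact hstart
  -- the position of u on ω
  obtain ⟨m, hmle, hm⟩ := (ω.memV_iff u).mp htmem
  have hmnej : m ≠ j := by
    intro h
    apply hκu
    rw [← hvj, ← h, hm]
  rcases Nat.lt_or_ge m j with hlt | hge
  · exact core c v κ u α ω hn hωsimple hωcl hωsrc hω0 hmin j m hlt hjn hvj hm
      hc1 hc2 hee q' ht' hq'simple hq'cf hq'src hq'tgt hκu hq'start
      (fun k h1 h2 => by
        rw [pV k (by rw [hq'len] at h2; omega)]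
        exact htmin k h1 (by rw [hq'len] at h2; omega))
  · -- j < m : apply the core lemma to the reversed cycle
    have hjm : j < m := by omega
    set ωR := ω.rev hn with hωRdef
    have hRlen : ωR.len = ω.len := rfl
    have hnR : 0 < ωR.len := by rw [hRlen]; exact hn
    have hRsimple : ωR.IsSimple := by
      apply mk'_isSimple
      · intro a b hA hB hEq
        have := Walk.edge_inj' hωsimple hn (show ω.len - 1 - a < ω.len by omega)
          (show ω.len - 1 - b < ω.len by omega) hEq
        omega
      · intro a b hA hB hab hEq
        have := Walk.vert_inj' hωsimple (show ω.len - a ≤ ω.len by omega)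
          (show ω.len - b ≤ ω.len by omega) hEq
        omega
    have hRsrc : ωR.src = v := by
      rw [ωR.src_eq_V', rev_V' ω hn 0 (by omega), show ω.len - 0 = ω.len by omega,
        hωtail, hv0]
    have hRcl : ωR.IsClosed := by
      have h2 : ωR.tgt = ωR.V' ωR.len := (ωR.V'_eq (le_refl _) (by omega)).symm
      rw [Walk.IsClosed, h2, hRlen, rev_V' ω hn ω.len (le_refl _),
        show ω.len - ω.len = 0 by omega, hRsrc, hv0]
    have hRcusp : ∀ i, ωR.CuspIdx c i → ω.CuspIdx c (if i = 0 then 0 else ω.len - i) := by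
      intro i hi
      rcases cusp_lt_len hi with h | ⟨h1, h2⟩
      · subst h
        rw [if_pos rfl]
        rw [ωR.cuspIdx_zero c hnR] at hi
        obtain ⟨_, hne0, hcol0⟩ := hi
        rw [hRlen] at hne0 hcol0
        rw [rev_Ed ω hn (ω.len - 1) (by omega) hnR, rev_Ed ω hn 0 (by omega) hnR,
          show ω.len - 1 - (ω.len - 1) = 0 by omega, show ω.len - 1 - 0 = ω.len - 1 by omega]
          at hne0 hcol0
        rw [hRsrc] at hcol0
        rw [ω.cuspIdx_zero c hn]
        exact ⟨hωcl, hne0.symm, by rw [hωsrc]; exact hcol0.symm⟩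
      · rw [hRlen] at h2
        rw [if_neg (by omega)]
        rw [ωR.cuspIdx_int c hnR h1 (by rw [hRlen]; exact h2)] at hi
        obtain ⟨hne1, hcol1⟩ := hi
        rw [rev_Ed ω hn (i-1) (by omega) hnR, rev_Ed ω hn i (by omega) hnR] at hne1 hcol1
        rw [rev_V' ω hn i (by omega)] at hcol1
        rw [show ω.len - 1 - (i - 1) = ω.len - i by omega] at hne1 hcol1
        rw [ω.cuspIdx_int c hn (by omega) (by omega),
          show ω.len - i - 1 = ω.len - 1 - i by omega]
        exact ⟨hne1.symm, hcol1.symm⟩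
    have hR0 : ¬ ωR.CuspIdx c 0 := by
      intro h
      have := hRcusp 0 h
      rw [if_pos rfl] at this
      exact hω0 this
    have hRmem : ∀ x, ωR.MemV x → ω.MemV x := by
      intro x hx
      rw [Walk.memV_iff] at hx ⊢
      obtain ⟨i, hi, hix⟩ := hx
      rw [hRlen] at hi
      rw [rev_V' ω hn i hi] at hix
      exact ⟨ω.len - i, by omega, hix⟩
    have hRle : ωR.cuspCount c ≤ ω.cuspCount c := by
      rw [Walk.cuspCount, Walk.cuspCount]
      refine ncard_le_of_inj _ _ (fun i => if i = 0 then 0 else ω.len - i)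
        (cusps_finite c ω) ?_ ?_
      · intro i hi
        exact hRcusp i hi
      · intro i1 h1 i2 h2 hEq
        simp only [Set.mem_setOf_eq] at h1 h2
        simp only [] at hEq
        have b1 := cusp_lt_len h1
        have b2 := cusp_lt_len h2
        rw [hRlen] at b1 b2
        by_cases z1 : i1 = 0 <;> by_cases z2 : i2 = 0
        · omega
        · rw [if_pos z1, if_neg z2] at hEq; omega
        · rw [if_neg z1, if_pos z2] at hEq; omega
        · rw [if_neg z1, if_neg z2] at hEq; omega
    have hRmin : ∀ ω' : G.Walk, ω'.IsCycle → ω'.src = v → ¬ Walk.CuspIdx c ω' 0 →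
        ωR.cuspCount c ≤ ω'.cuspCount c :=
      fun ω' a b cc => le_trans hRle (hmin ω' a b cc)
    have hvj' : ωR.V' (ω.len - j) = κ := by
      rw [rev_V' ω hn _ (by omega), show ω.len - (ω.len - j) = j by omega]
      exact hvj
    have hvm' : ωR.V' (ω.len - m) = u := by
      rw [rev_V' ω hn _ (by omega), show ω.len - (ω.len - m) = m by omega]
      exact hm
    have hc1' : c (ωR.Ed hnR (ω.len - j - 1)) κ = α := by
      rw [rev_Ed ω hn _ (by omega) hnR, show ω.len - 1 - (ω.len - j - 1) = j by omega]
      exact hc2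
    have hc2' : c (ωR.Ed hnR (ω.len - j)) κ = α := by
      rw [rev_Ed ω hn _ (by omega) hnR, show ω.len - 1 - (ω.len - j) = j - 1 by omega]
      exact hc1
    have hee' : ωR.Ed hnR (ω.len - j - 1) ≠ ωR.Ed hnR (ω.len - j) := by
      rw [rev_Ed ω hn _ (by omega) hnR, rev_Ed ω hn _ (by omega) hnR,
        show ω.len - 1 - (ω.len - j - 1) = j by omega,
        show ω.len - 1 - (ω.len - j) = j - 1 by omega]
      exact hee.symm
    have hRn : ωR.len = ω.len := rfl
    exact core c v κ u α ωR hnR hRsimple hRcl hRsrc hR0 hRmin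
      (ω.len - j) (ω.len - m) (by omega) (by rw [hRn]; omega) hvj' hvm'
      hc1' hc2' hee' q' ht' hq'simple hq'cf hq'src hq'tgt hκu hq'start
      (fun k h1 h2 => by
        rw [pV k (by rw [hq'len] at h2; omega)]
        intro hmem
        exact htmin k h1 (by rw [hq'len] at h2; omega) (hRmem _ hmem))
end
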